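/- arXiv:1908.07948 — 10 statements merged into one kernel-verified Lean document; each statement's English description precedes it below -/
import Mathlib

section
/- Let m ≥ 1, σ > 1, and weights β ∈ ℝ^m with β_j > 0 for all j and Σ_j β_j = 1. For any price vector p ∈ ℝ^m with p_j > 0 for all j and any budget b > 0, the CES utility function u(x) = (Σ_{j=1}^m β_j^{1/σ} x_j^{(σ−1)/σ})^{σ/(σ−1)} attains its maximum over the budget set {x ∈ ℝ^m : x ≥ 0, p·x ≤ b} at the unique point x* given by x*_j = β_j p_j^{−σ} b / (Σ_{k=1}^m β_k p_k^{1−σ}) for every j. -/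
/-!
With `r = (σ - 1) / σ ∈ (0, 1)`, the utility is an increasing function of
`F x = ∑ j, β j ^ (1 / σ) * x j ^ r`, a sum of strictly concave functions of the coordinates.
The bundle `x*` exhausts the budget and satisfies the first-order condition
`β j ^ (1 / σ) * x*_j ^ (r - 1) = λ * p j` with `λ > 0`, so summing the tangent-line inequalities
of `t ↦ t ^ r` at `x*` gives `F x ≤ F x* + r λ (p·x - b) ≤ F x*` on the budget set, strictly
unless `x = x*`.
-/

open Finset

namespace Real

lemma rpow_mul_one_add_mul_div_sub_one {a : ℝ} (ha : 0 < a) (t r : ℝ) :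
    a ^ r * (1 + r * (t / a - 1)) = a ^ r + r * a ^ (r - 1) * (t - a) := by
  rw [rpow_sub_one ha.ne']
  field_simp

lemma rpow_le_tangent {a t r : ℝ} (ha : 0 < a) (ht : 0 ≤ t) (hr₀ : 0 ≤ r) (hr₁ : r ≤ 1) :
    t ^ r ≤ a ^ r + r * a ^ (r - 1) * (t - a) := by
  have hs : -1 ≤ t / a - 1 := by linarith [div_nonneg ht ha.le]
  have h := rpow_one_add_le_one_add_mul_self hs hr₀ hr₁
  rw [add_sub_cancel, div_rpow ht ha.le, div_le_iff₀' (rpow_pos_of_pos ha r)] at h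
  rwa [← rpow_mul_one_add_mul_div_sub_one ha]

lemma rpow_lt_tangent {a t r : ℝ} (ha : 0 < a) (ht : 0 ≤ t) (hta : t ≠ a) (hr₀ : 0 < r)
    (hr₁ : r < 1) : t ^ r < a ^ r + r * a ^ (r - 1) * (t - a) := by
  have hs₁ : -1 ≤ t / a - 1 := by linarith [div_nonneg ht ha.le]
  have hs : t / a - 1 ≠ 0 := by rwa [sub_ne_zero, ne_eq, div_eq_one_iff_eq ha.ne']
  have h := rpow_one_add_lt_one_add_mul_self hs₁ hs hr₀ hr₁
  rw [add_sub_cancel, div_rpow ht ha.le, div_lt_iff₀' (rpow_pos_of_pos ha r)] at h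
  rwa [← rpow_mul_one_add_mul_div_sub_one ha]

end Real

section Tangent

variable {ι : Type*} [Fintype ι] {r lam : ℝ} {c a p x : ι → ℝ}

lemma sum_tangent_eq_of_foc (hfoc : ∀ j, c j * a j ^ (r - 1) = lam * p j) :
    ∑ j, (c j * a j ^ r + r * (c j * a j ^ (r - 1)) * (x j - a j)) =
      ∑ j, c j * a j ^ r + r * lam * (∑ j, p j * x j - ∑ j, p j * a j) := by
  simp only [hfoc, sum_add_distrib, mul_sum, ← sum_sub_distrib]
  congr 1
  exact sum_congr rfl fun j _ => by ring

lemma sum_mul_rpow_lt_of_foc (hr₀ : 0 < r) (hr₁ : r < 1) (hlam : 0 ≤ lam)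
    (hc : ∀ j, 0 < c j) (ha : ∀ j, 0 < a j) (hx : ∀ j, 0 ≤ x j)
    (hfoc : ∀ j, c j * a j ^ (r - 1) = lam * p j) (hbudget : ∑ j, p j * x j ≤ ∑ j, p j * a j)
    (hxa : x ≠ a) : ∑ j, c j * x j ^ r < ∑ j, c j * a j ^ r := by
  have htangent : ∀ j, c j * x j ^ r ≤ c j * a j ^ r + r * (c j * a j ^ (r - 1)) * (x j - a j) :=
    fun j => by
      have := mul_le_mul_of_nonneg_left
        (Real.rpow_le_tangent (ha j) (hx j) hr₀.le hr₁.le) (hc j).le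
      linarith
  obtain ⟨k, hk⟩ := Function.ne_iff.mp hxa
  have htangent_k : c k * x k ^ r < c k * a k ^ r + r * (c k * a k ^ (r - 1)) * (x k - a k) := by
    have := mul_lt_mul_of_pos_left (Real.rpow_lt_tangent (ha k) (hx k) hk hr₀ hr₁) (hc k)
    linarith
  have hslack : r * lam * (∑ j, p j * x j - ∑ j, p j * a j) ≤ 0 :=
    mul_nonpos_of_nonneg_of_nonpos (mul_nonneg hr₀.le hlam) (sub_nonpos.mpr hbudget)
  calc ∑ j, c j * x j ^ r
      < ∑ j, (c j * a j ^ r + r * (c j * a j ^ (r - 1)) * (x j - a j)) :=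
        sum_lt_sum (fun j _ => htangent j) ⟨k, mem_univ k, htangent_k⟩
    _ ≤ ∑ j, c j * a j ^ r := by rw [sum_tangent_eq_of_foc hfoc]; linarith

end Tangent

noncomputable section

variable {ι : Type*} [Fintype ι]

def cesPriceSum (σ : ℝ) (β p : ι → ℝ) : ℝ := ∑ k, β k * p k ^ (1 - σ)

def cesDemand (σ b : ℝ) (β p : ι → ℝ) (j : ι) : ℝ := β j * p j ^ (-σ) * b / cesPriceSum σ β p

variable {σ b : ℝ} {β p : ι → ℝ}

lemma cesPriceSum_pos [Nonempty ι] (hβ : ∀ j, 0 < β j) (hp : ∀ j, 0 < p j) :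
    0 < cesPriceSum σ β p :=
  sum_pos (fun k _ => mul_pos (hβ k) (Real.rpow_pos_of_pos (hp k) _)) univ_nonempty

lemma cesDemand_pos (hb : 0 < b) (hβ : ∀ j, 0 < β j) (hp : ∀ j, 0 < p j) (j : ι) :
    0 < cesDemand σ b β p j :=
  have : Nonempty ι := ⟨j⟩
  div_pos (mul_pos (mul_pos (hβ j) (Real.rpow_pos_of_pos (hp j) _)) hb) (cesPriceSum_pos hβ hp)

lemma sum_mul_cesDemand [Nonempty ι] (hβ : ∀ j, 0 < β j) (hp : ∀ j, 0 < p j) :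
    ∑ j, p j * cesDemand σ b β p j = b := by
  have hterm : ∀ j, p j * cesDemand σ b β p j = β j * p j ^ (1 - σ) * b / cesPriceSum σ β p := by
    intro j
    rw [cesDemand, sub_eq_add_neg, Real.rpow_add (hp j), Real.rpow_one]
    ring
  rw [sum_congr rfl fun j _ => hterm j, ← sum_div, ← sum_mul]
  exact mul_div_cancel_left₀ b (cesPriceSum_pos hβ hp).ne'

lemma cesDemand_foc (hσ : σ ≠ 0) (hb : 0 < b) (hβ : ∀ j, 0 < β j) (hp : ∀ j, 0 < p j) (j : ι) :
    β j ^ (1 / σ) * cesDemand σ b β p j ^ ((σ - 1) / σ - 1) =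
      (b / cesPriceSum σ β p) ^ (-(1 / σ)) * p j := by
  have : Nonempty ι := ⟨j⟩
  have hexp : (σ - 1) / σ - 1 = -(1 / σ) := by field_simp; ring
  have hdemand : cesDemand σ b β p j = β j * p j ^ (-σ) * (b / cesPriceSum σ β p) := by
    rw [cesDemand]; ring
  have hS := (div_pos hb (cesPriceSum_pos hβ hp (σ := σ))).le
  have hp' : 0 ≤ p j ^ (-σ) := Real.rpow_nonneg (hp j).le _
  rw [hexp, hdemand, Real.mul_rpow (mul_nonneg (hβ j).le hp') hS, Real.mul_rpow (hβ j).le hp',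
    ← Real.rpow_mul (hp j).le, neg_mul_neg, mul_one_div_cancel hσ, Real.rpow_one,
    ← mul_assoc, ← mul_assoc, ← Real.rpow_add (hβ j), add_neg_cancel, Real.rpow_zero]
  ring

end

theorem ces_utility_max_at_unique_point_general
    (m : ℕ) (hm : 1 ≤ m) (σ : ℝ) (hσ : 1 < σ)
    (β : Fin m → ℝ) (hβ : ∀ j, 0 < β j)
    (p : Fin m → ℝ) (hp : ∀ j, 0 < p j) (b : ℝ) (hb : 0 < b)
    (u : (Fin m → ℝ) → ℝ)
    (hu : ∀ x : Fin m → ℝ,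
      u x = (∑ j, (β j) ^ (1 / σ) * (x j) ^ ((σ - 1) / σ)) ^ (σ / (σ - 1)))
    (xstar : Fin m → ℝ)
    (hxstar : ∀ j, xstar j = β j * (p j) ^ (-σ) * b / (∑ k, β k * (p k) ^ (1 - σ))) :
    (∀ j, 0 ≤ xstar j) ∧ (∑ j, p j * xstar j ≤ b) ∧
    (∀ x : Fin m → ℝ, (∀ j, 0 ≤ x j) → (∑ j, p j * x j ≤ b) → u x ≤ u xstar) ∧
    (∀ x : Fin m → ℝ, (∀ j, 0 ≤ x j) → (∑ j, p j * x j ≤ b) → u x = u xstar →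
      x = xstar) := by
  obtain rfl : xstar = cesDemand σ b β p := funext hxstar
  have : Nonempty (Fin m) := Fin.pos_iff_nonempty.mp hm
  have hσ₀ : 0 < σ := by linarith
  have hr₀ : 0 < (σ - 1) / σ := div_pos (by linarith) hσ₀
  have hr₁ : (σ - 1) / σ < 1 := (div_lt_one hσ₀).mpr (by linarith)
  have hexp : 0 < σ / (σ - 1) := div_pos hσ₀ (by linarith)
  have hc : ∀ j, 0 < β j ^ (1 / σ) := fun j => Real.rpow_pos_of_pos (hβ j) _
  have hlam : 0 ≤ (b / cesPriceSum σ β p) ^ (-(1 / σ)) :=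
    Real.rpow_nonneg (div_pos hb (cesPriceSum_pos hβ hp)).le _
  have hdemand_pos := cesDemand_pos (σ := σ) hb hβ hp
  have hfoc := cesDemand_foc hσ₀.ne' hb hβ hp
  have hbudget := sum_mul_cesDemand (σ := σ) (b := b) hβ hp
  have hlt : ∀ x : Fin m → ℝ, (∀ j, 0 ≤ x j) → ∑ j, p j * x j ≤ b → x ≠ cesDemand σ b β p →
      u x < u (cesDemand σ b β p) := fun x hx hbx hxa => by
    rw [hu, hu]
    exact Real.rpow_lt_rpow (sum_nonneg fun j _ => mul_nonneg (hc j).le (Real.rpow_nonneg (hx j) _))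
      (sum_mul_rpow_lt_of_foc hr₀ hr₁ hlam hc hdemand_pos hx hfoc (hbx.trans hbudget.ge) hxa) hexp
  refine ⟨fun j => (hdemand_pos j).le, hbudget.le, fun x hx hbx => ?_, fun x hx hbx hux => ?_⟩
  · obtain rfl | hxa := eq_or_ne x (cesDemand σ b β p)
    · exact le_rfl
    · exact (hlt x hx hbx hxa).le
  · by_contra hxa
    exact (hlt x hx hbx hxa).ne hux

/-- The CES utility `u(x) = (Σ_j β_j^(1/σ) x_j^((σ-1)/σ))^(σ/(σ-1))`
with parameter `σ > 1` and positive weights `β` summing to `1` attains its maximum over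
the budget set `{x ≥ 0 : p·x ≤ b}` at the unique point
`x*_j = β_j p_j^(-σ) b / (Σ_k β_k p_k^(1-σ))`. -/
theorem ces_utility_max_at_unique_point
    (m : ℕ) (hm : 1 ≤ m) (σ : ℝ) (hσ : 1 < σ)
    (β : Fin m → ℝ) (hβ : ∀ j, 0 < β j) (hβ1 : ∑ j, β j = 1)
    (p : Fin m → ℝ) (hp : ∀ j, 0 < p j) (b : ℝ) (hb : 0 < b)
    (u : (Fin m → ℝ) → ℝ)
    (hu : ∀ x : Fin m → ℝ,
      u x = (∑ j, (β j) ^ (1 / σ) * (x j) ^ ((σ - 1) / σ)) ^ (σ / (σ - 1)))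
    (xstar : Fin m → ℝ)
    (hxstar : ∀ j, xstar j = β j * (p j) ^ (-σ) * b / (∑ k, β k * (p k) ^ (1 - σ))) :
    (∀ j, 0 ≤ xstar j) ∧ (∑ j, p j * xstar j ≤ b) ∧
    (∀ x : Fin m → ℝ, (∀ j, 0 ≤ x j) → (∑ j, p j * x j ≤ b) → u x ≤ u xstar) ∧
    (∀ x : Fin m → ℝ, (∀ j, 0 ≤ x j) → (∑ j, p j * x j ≤ b) → u x = u xstar →
      x = xstar) :=
  ces_utility_max_at_unique_point_general m hm σ hσ β hβ p hp b hb u hu xstar hxstar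
end

section
/- Let u : ℝ_{≥0}^m → ℝ_{≥0} be a concave, componentwise nondecreasing function, let p ∈ ℝ_{≥0}^m be a price vector and b > 0 a budget. If x* maximizes the Gale objective b·log u(x) − p·x over {x ∈ ℝ_{≥0}^m : u(x) > 0} and u(x*) > 0, then p·x* ≤ b; that is, every optimal bundle of the Gale demand system stays within the budget b. -/
open Finset

/-- For a concave, componentwise nondecreasing utility
`u : ℝ_{≥0}^m → ℝ_{≥0}`, nonnegative prices `p` and budget `b > 0`, every maximizer of
the Gale objective `b·log u(x) − p·x` over `{x ≥ 0 : u(x) > 0}` stays within the budget: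
`p·x* ≤ b`. -/
theorem gale_demand_within_budget
    (m : ℕ) (u : (Fin m → ℝ) → ℝ)
    (hu_nonneg : ∀ x : Fin m → ℝ, (∀ j, 0 ≤ x j) → 0 ≤ u x)
    (hu_concave : ConcaveOn ℝ {x : Fin m → ℝ | ∀ j, 0 ≤ x j} u)
    (hu_mono : ∀ x y : Fin m → ℝ, (∀ j, 0 ≤ x j) → (∀ j, x j ≤ y j) → u x ≤ u y)
    (p : Fin m → ℝ) (hp : ∀ j, 0 ≤ p j) (b : ℝ) (hb : 0 < b)
    (xstar : Fin m → ℝ) (hx0 : ∀ j, 0 ≤ xstar j) (hux : 0 < u xstar)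
    (hmax : ∀ x : Fin m → ℝ, (∀ j, 0 ≤ x j) → 0 < u x →
      b * Real.log (u x) - ∑ j, p j * x j ≤
        b * Real.log (u xstar) - ∑ j, p j * xstar j) :
    ∑ j, p j * xstar j ≤ b := by
  set P := ∑ j, p j * xstar j with hPdef
  have hPnn : 0 ≤ P := Finset.sum_nonneg fun j _ => mul_nonneg (hp j) (hx0 j)
  have key : ∀ t : ℝ, 0 < t → t < 1 → P ≤ b / t := by
    intro t ht0 ht1
    have hxt : ∀ j, 0 ≤ t * xstar j := fun j => mul_nonneg ht0.le (hx0 j)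
    have h0mem : (fun _ : Fin m => (0:ℝ)) ∈ {x : Fin m → ℝ | ∀ j, 0 ≤ x j} :=
      fun j => le_refl 0
    have hcon := hu_concave.2 (show xstar ∈ _ from hx0) h0mem ht0.le
      (by linarith : (0:ℝ) ≤ 1 - t) (by ring)
    have harg : (t • xstar + (1 - t) • (fun _ : Fin m => (0:ℝ)))
        = fun j => t * xstar j := by
      funext j; simp
    rw [harg] at hcon
    have hu0 : 0 ≤ u (fun _ => 0) := hu_nonneg _ (fun j => le_refl 0)
    have hut : t * u xstar ≤ u (fun j => t * xstar j) := by
      have : (1 - t) * u (fun _ : Fin m => (0:ℝ)) ≥ 0 :=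
        mul_nonneg (by linarith) hu0
      simp only [smul_eq_mul] at hcon
      linarith
    have hutpos : 0 < u (fun j => t * xstar j) :=
      lt_of_lt_of_le (by positivity) hut
    have hm := hmax (fun j => t * xstar j) hxt hutpos
    have hsum : ∑ j, p j * (t * xstar j) = t * P := by
      rw [hPdef, Finset.mul_sum]; congr 1; funext j; ring
    rw [hsum] at hm
    have hlog : Real.log t + Real.log (u xstar) ≤ Real.log (u (fun j => t * xstar j)) := by
      rw [← Real.log_mul (ne_of_gt ht0) (ne_of_gt hux)]
      exact Real.log_le_log (by positivity) hut
    have hlogt : -Real.log t ≤ (1 - t) / t := by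
      have h1 : Real.log (1 / t) ≤ 1 / t - 1 :=
        Real.log_le_sub_one_of_pos (by positivity)
      rw [Real.log_div one_ne_zero (ne_of_gt ht0), Real.log_one] at h1
      have : 1 / t - 1 = (1 - t) / t := by field_simp
      linarith [this ▸ h1]
    -- combine
    have h1 : (1 - t) * P ≤ -(b * Real.log t) := by nlinarith
    have h2 : -(b * Real.log t) ≤ b * ((1 - t) / t) := by nlinarith
    have h3 : (1 - t) * P ≤ b * ((1 - t) / t) := le_trans h1 h2
    rw [le_div_iff₀ ht0]
    have ht1' : 0 < 1 - t := by linarith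
    calc P * t = ((1 - t) * P) * (t / (1 - t)) := by field_simp
      _ ≤ (b * ((1 - t) / t)) * (t / (1 - t)) := by
          apply mul_le_mul_of_nonneg_right h3; positivity
      _ = b := by field_simp
  by_contra h
  push_neg at h
  have hP0 : 0 < P := lt_trans hb h
  set t : ℝ := (b / P + 1) / 2 with htdef
  have hbP : b / P < 1 := (div_lt_one hP0).mpr h
  have ht0 : 0 < t := by positivity
  have ht1 : t < 1 := by rw [htdef]; linarith
  have := key t ht0 ht1
  have hbt : b / t < P := by
    rw [div_lt_iff₀ ht0]
    have h4 : b / P < t := by rw [htdef]; linarith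
    have h5 : (b / P) * P = b := by field_simp
    nlinarith [mul_lt_mul_of_pos_right h4 hP0]
  linarith
end

section
/- Let m ≥ 1, ε ∈ (0, 1/4), b ≥ 0, s with 0 ≤ s ≤ b, vectors p̃, y, c ∈ ℝ_{≥0}^m, and a partition of {1,…,m} into three sets T1, T2, T3. Assume: (1) p̃·y = b; (2) y_j ≤ (1+ε)c_j for every j ∈ T3; and (3) p̃·c ≤ (1+ε)(b − s). Then Σ_{j∈T1} p̃_j y_j + Σ_{j∈T2} p̃_j (y_j − c_j) ≥ s − 2.25·ε·b. -/
open Finset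

/-- Claim 3.5 of the paper. If `p̃·y = b` (non-satiation),
`y_j ≤ (1+ε) c_j` for every `j ∈ T3`, and `p̃·c ≤ (1+ε)(b − s)`, where `T1, T2, T3`
partition the goods, `0 ≤ s ≤ b`, and `ε ∈ (0, 1/4)`, then
`Σ_{j∈T1} p̃_j y_j + Σ_{j∈T2} p̃_j (y_j − c_j) ≥ s − 2.25 ε b`. -/
theorem surplus_spending_increase
    (m : ℕ) (hm : 1 ≤ m) (ε : ℝ) (hε0 : 0 < ε) (hε : ε < 1 / 4)
    (b s : ℝ) (hs0 : 0 ≤ s) (hsb : s ≤ b)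
    (pt y c : Fin m → ℝ)
    (hpt : ∀ j, 0 ≤ pt j) (hy : ∀ j, 0 ≤ y j) (hc : ∀ j, 0 ≤ c j)
    (T1 T2 T3 : Finset (Fin m))
    (h12 : Disjoint T1 T2) (h13 : Disjoint T1 T3) (h23 : Disjoint T2 T3)
    (hcover : T1 ∪ T2 ∪ T3 = Finset.univ)
    (h1 : ∑ j, pt j * y j = b)
    (h2 : ∀ j ∈ T3, y j ≤ (1 + ε) * c j)
    (h3 : ∑ j, pt j * c j ≤ (1 + ε) * (b - s)) :
    s - 2.25 * ε * b ≤ ∑ j ∈ T1, pt j * y j + ∑ j ∈ T2, pt j * (y j - c j) := by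
  have hsplit : ∀ f : Fin m → ℝ, ∑ j, f j = ∑ j ∈ T1, f j + ∑ j ∈ T2, f j + ∑ j ∈ T3, f j := by
    intro f
    rw [← Finset.sum_union h12, ← Finset.sum_union (by
      rw [Finset.disjoint_union_left]; exact ⟨h13, h23⟩), hcover]
  have hy1 := hsplit (fun j => pt j * y j)
  have hc1 := hsplit (fun j => pt j * c j)
  have hT3 : ∑ j ∈ T3, pt j * y j ≤ (1 + ε) * ∑ j ∈ T3, pt j * c j := by
    rw [Finset.mul_sum]
    apply Finset.sum_le_sum
    intro j hj
    calc pt j * y j ≤ pt j * ((1 + ε) * c j) := by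
          exact mul_le_mul_of_nonneg_left (h2 j hj) (hpt j)
      _ = (1 + ε) * (pt j * c j) := by ring
  have hT1c : 0 ≤ ∑ j ∈ T1, pt j * c j :=
    Finset.sum_nonneg fun j _ => mul_nonneg (hpt j) (hc j)
  have hT2c : 0 ≤ ∑ j ∈ T2, pt j * c j :=
    Finset.sum_nonneg fun j _ => mul_nonneg (hpt j) (hc j)
  have hT3c : 0 ≤ ∑ j ∈ T3, pt j * c j :=
    Finset.sum_nonneg fun j _ => mul_nonneg (hpt j) (hc j)
  have hsub : ∑ j ∈ T2, pt j * (y j - c j)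
      = ∑ j ∈ T2, pt j * y j - ∑ j ∈ T2, pt j * c j := by
    rw [← Finset.sum_sub_distrib]
    apply Finset.sum_congr rfl
    intro j _; ring
  rw [hsub]
  nlinarith [mul_nonneg (mul_nonneg hε0.le hε0.le) (sub_nonneg.2 hsb),
    mul_nonneg hε0.le hT3c, mul_nonneg hε0.le (sub_nonneg.2 hsb)]
end

section
/- Let v ∈ ℝ_{≥0}^m, ε > 0, b > 0, and p ∈ ℝ_{>0}^m, and let p⁰ be a price vector with p ≤ p⁰ ≤ (1+ε)p componentwise. For q ∈ ℝ_{>0}^m write D(q,b) = argmax{v·z : z ∈ ℝ_{≥0}^m, q·z ≤ b} for the linear demand system. Suppose c ∈ ℝ_{≥0}^m satisfies c ≤ x for some x ∈ D(p⁰,b). Then there exist a price vector p̃ and a bundle y such that: p⁰ ≤ p̃ ≤ (1+ε)p componentwise, y ∈ D(p̃,b), y ≥ c componentwise, and p̃_j = (1+ε)p_j for every good j with y_j > c_j. -/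
open Finset

set_option maxHeartbeats 1600000

/-- Lemma 3.6, existence content of `FindNewPrices` for linear demand
systems. Given a linear demand system `D(q,b) = argmax{v·z : z ≥ 0, q·z ≤ b}`, prices
`p ≤ p⁰ ≤ (1+ε)p` and a bundle `c` dominated by some optimal bundle `x ∈ D(p⁰,b)`, there
exist prices `p̃` with `p⁰ ≤ p̃ ≤ (1+ε)p` and a bundle `y ∈ D(p̃,b)` with `y ≥ c` such
that `p̃_j = (1+ε)p_j` for every good `j` with `y_j > c_j`. -/
theorem findNewPrices_linear
    (m : ℕ) (v : Fin m → ℝ) (hv : ∀ j, 0 ≤ v j)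
    (ε b : ℝ) (hε : 0 < ε) (hb : 0 < b)
    (p p0 : Fin m → ℝ) (hp : ∀ j, 0 < p j)
    (hp0l : ∀ j, p j ≤ p0 j) (hp0u : ∀ j, p0 j ≤ (1 + ε) * p j)
    (c x : Fin m → ℝ) (hc : ∀ j, 0 ≤ c j) (hcx : ∀ j, c j ≤ x j)
    (hx_nonneg : ∀ j, 0 ≤ x j) (hx_bud : ∑ j, p0 j * x j ≤ b)
    (hx_opt : ∀ z : Fin m → ℝ, (∀ j, 0 ≤ z j) → (∑ j, p0 j * z j ≤ b) →
      ∑ j, v j * z j ≤ ∑ j, v j * x j) :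
    ∃ pt y : Fin m → ℝ,
      (∀ j, p0 j ≤ pt j) ∧ (∀ j, pt j ≤ (1 + ε) * p j) ∧
      (∀ j, 0 ≤ y j) ∧ (∑ j, pt j * y j ≤ b) ∧
      (∀ z : Fin m → ℝ, (∀ j, 0 ≤ z j) → (∑ j, pt j * z j ≤ b) →
        ∑ j, v j * z j ≤ ∑ j, v j * y j) ∧
      (∀ j, c j ≤ y j) ∧
      (∀ j, c j < y j → pt j = (1 + ε) * p j) := by
  have hp0pos : ∀ j, 0 < p0 j := fun j => lt_of_lt_of_le (hp j) (hp0l j)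
  have hcap : ∀ j, 0 < (1 + ε) * p j := fun j => by nlinarith [hp j]
  by_cases hv0 : ∀ j, v j = 0
  · refine ⟨p0, c, fun j => le_refl _, hp0u, hc, ?_, ?_, fun j => le_refl _, ?_⟩
    · calc ∑ j, p0 j * c j ≤ ∑ j, p0 j * x j := by
            apply Finset.sum_le_sum
            intro j _
            exact mul_le_mul_of_nonneg_left (hcx j) (hp0pos j).le
        _ ≤ b := hx_bud
    · intro z hz hzb; simp [hv0]
    · intro j hj; exact absurd hj (lt_irrefl _)
  · push_neg at hv0
    obtain ⟨j0, hj0⟩ := hv0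
    have hj0pos : 0 < v j0 := lt_of_le_of_ne (hv j0) (Ne.symm hj0)
    -- the exchange lemma: optimal bundles put weight only on best bang-per-buck goods
    have L1 : ∀ j, 0 < x j → ∀ k, v k * p0 j ≤ v j * p0 k := by
      intro j hxj k
      rcases eq_or_ne k j with rfl | hkj
      · exact le_refl _
      · set d : ℝ := p0 j * x j / p0 k with hd
        have hdpos : 0 < d := div_pos (mul_pos (hp0pos j) hxj) (hp0pos k)
        set z : Fin m → ℝ :=
          fun i => x i + (if i = k then d else 0) - (if i = j then x j else 0) with hz
        have hsumz : ∀ w : Fin m → ℝ,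
            ∑ i, w i * z i = (∑ i, w i * x i) + w k * d - w j * x j := by
          intro w
          have : ∀ i, w i * z i
              = w i * x i + (if i = k then w i * d else 0) - (if i = j then w i * x j else 0) := by
            intro i
            simp only [hz]
            rcases eq_or_ne i k with rfl | h1 <;> rcases eq_or_ne i j with rfl | h2 <;>
              simp_all <;> ring
          rw [Finset.sum_congr rfl (fun i _ => this i)]
          rw [Finset.sum_sub_distrib, Finset.sum_add_distrib,
            Finset.sum_ite_eq' univ k, Finset.sum_ite_eq' univ j]
          simp
        have hznn : ∀ i, 0 ≤ z i := by
          intro i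
          simp only [hz]
          by_cases h2 : i = j
          · rw [h2, if_pos rfl, if_neg (fun h : j = k => hkj h.symm)]
            simp
          · rw [if_neg h2]
            by_cases h1 : i = k
            · rw [if_pos h1]
              have := hx_nonneg i
              linarith
            · rw [if_neg h1]
              have := hx_nonneg i
              linarith
        have hzbud : ∑ i, p0 i * z i ≤ b := by
          rw [hsumz p0]
          have hpk : p0 k * d = p0 j * x j := by
            rw [hd, mul_comm, div_mul_cancel₀ _ (hp0pos k).ne']
          rw [hpk]
          linarith [hx_bud]
        have hopt := hx_opt z hznn hzbud
        rw [hsumz v] at hopt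
        -- v k * d ≤ v j * x j
        have h1 : v k * d ≤ v j * x j := by linarith
        have h3 : v k * (p0 j * x j) ≤ v j * x j * p0 k := by
          have h2 := mul_le_mul_of_nonneg_right h1 (hp0pos k).le
          calc v k * (p0 j * x j) = v k * d * p0 k := by
                rw [hd, mul_assoc, div_mul_cancel₀ _ (hp0pos k).ne']
            _ ≤ v j * x j * p0 k := h2
        nlinarith [h3, hxj]
    -- the maximum bang-per-buck at capped prices
    obtain ⟨js, -, hjs⟩ :=
      Finset.exists_max_image Finset.univ (fun j => v j / ((1 + ε) * p j)) ⟨j0, mem_univ j0⟩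
    have hjs' : ∀ j, v j / ((1 + ε) * p j) ≤ v js / ((1 + ε) * p js) :=
      fun j => hjs j (mem_univ j)
    set lam : ℝ := v js / ((1 + ε) * p js) with hlam_def
    have hlam_pos : 0 < lam :=
      lt_of_lt_of_le (div_pos hj0pos (hcap j0)) (hjs' j0)
    set vc : ℝ := ∑ j, v j * c j with hvc_def
    have hvc_nonneg : 0 ≤ vc :=
      Finset.sum_nonneg fun j _ => mul_nonneg (hv j) (hc j)
    set μ : ℝ := max lam (vc / b) with hμ_def
    have hμlam : lam ≤ μ := le_max_left _ _
    have hμvc : vc / b ≤ μ := le_max_right _ _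
    have hμpos : 0 < μ := lt_of_lt_of_le hlam_pos hμlam
    set pt : Fin m → ℝ := fun j => max (p0 j) (v j / μ) with hpt_def
    have hpt_l : ∀ j, p0 j ≤ pt j := fun j => le_max_left _ _
    have hpt_pos : ∀ j, 0 < pt j := fun j => lt_of_lt_of_le (hp0pos j) (hpt_l j)
    have hpt_u : ∀ j, pt j ≤ (1 + ε) * p j := by
      intro j
      apply max_le (hp0u j)
      rw [div_le_iff₀ hμpos]
      have h1 : v j / ((1 + ε) * p j) ≤ μ := le_trans (hjs' j) hμlam
      rw [div_le_iff₀ (hcap j)] at h1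
      linarith
    have key_v_le : ∀ j, v j ≤ μ * pt j := by
      intro j
      have h : v j / μ ≤ pt j := le_max_right _ _
      rw [div_le_iff₀ hμpos] at h
      linarith
    -- on goods with positive c, the price is exactly v j / μ
    have hF2 : ∀ j, 0 < c j → pt j = v j / μ := by
      intro j hcj
      have hxj : 0 < x j := lt_of_lt_of_le hcj (hcx j)
      have hL := L1 j hxj
      have h1 : lam * p0 j ≤ v j := by
        have h2 : lam * p0 js ≤ v js := by
          rw [hlam_def, div_mul_eq_mul_div, div_le_iff₀ (hcap js)]
          nlinarith [hp0u js, hv js, hp0pos js]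
        nlinarith [hL js, hp0pos j, hp0pos js, h2]
      have h2 : (vc / b) * p0 j ≤ v j := by
        have hsum : vc * p0 j ≤ v j * b := by
          have step1 : vc ≤ ∑ k, v k * x k := by
            rw [hvc_def]
            exact Finset.sum_le_sum fun k _ =>
              mul_le_mul_of_nonneg_left (hcx k) (hv k)
          have step2 : (∑ k, v k * x k) * p0 j ≤ (∑ k, p0 k * x k) * v j := by
            rw [Finset.sum_mul, Finset.sum_mul]
            apply Finset.sum_le_sum
            intro k _
            nlinarith [hL k, hx_nonneg k]
          have step3 : (∑ k, p0 k * x k) * v j ≤ b * v j :=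
            mul_le_mul_of_nonneg_right hx_bud (hv j)
          nlinarith [mul_le_mul_of_nonneg_right step1 (hp0pos j).le]
        rw [div_mul_eq_mul_div, div_le_iff₀ hb]
        nlinarith
      have hμle : μ * p0 j ≤ v j := by
        rw [hμ_def]
        rcases max_cases lam (vc / b) with ⟨h, -⟩ | ⟨h, -⟩ <;> rw [h]
        · exact h1
        · exact h2
      apply max_eq_right
      rw [le_div_iff₀ hμpos]
      linarith
    have hcost : ∑ j, pt j * c j = vc / μ := by
      rw [hvc_def, Finset.sum_div]
      apply Finset.sum_congr rfl
      intro j _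
      rcases (hc j).lt_or_eq with h | h
      · rw [hF2 j h]; ring
      · rw [← h]; simp
    have hvcμ : vc / μ ≤ b := by
      rw [div_le_iff₀ hμpos]
      rw [div_le_iff₀ hb] at hμvc
      nlinarith
    set t : ℝ := (b - vc / μ) / pt js with ht_def
    have ht : 0 ≤ t := div_nonneg (by linarith) (hpt_pos js).le
    set y : Fin m → ℝ := fun j => c j + if j = js then t else 0 with hy_def
    have hsum_y : ∀ w : Fin m → ℝ,
        ∑ j, w j * y j = (∑ j, w j * c j) + w js * t := by
      intro w
      have : ∀ j, w j * y j = w j * c j + (if j = js then w j * t else 0) := by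
        intro j
        simp only [hy_def]
        by_cases h : j = js
        · rw [if_pos h, if_pos h]; ring
        · rw [if_neg h, if_neg h]; ring
      rw [Finset.sum_congr rfl (fun j _ => this j), Finset.sum_add_distrib,
        Finset.sum_ite_eq' univ js]
      simp
    have hptt : pt js * t = b - vc / μ := by
      rw [ht_def, mul_div_cancel₀ _ (hpt_pos js).ne']
    have hTcase : t ≠ 0 → pt js = (1 + ε) * p js ∧ v js = μ * pt js := by
      intro htne
      have h1 : vc / μ < b := by
        rcases lt_or_eq_of_le hvcμ with h | h
        · exact h
        · exfalso; apply htne; rw [ht_def, h]; simp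
      have hμeq : μ = lam := by
        have hlt : vc / b < μ := by
          rw [div_lt_iff₀ hb]
          rw [div_lt_iff₀ hμpos] at h1
          nlinarith
        rcases max_choice lam (vc / b) with h | h
        · rw [hμ_def]; exact h
        · exfalso; rw [hμ_def] at hlt; rw [h] at hlt; exact lt_irrefl _ hlt
      have hveq : v js = lam * ((1 + ε) * p js) := by
        rw [hlam_def, div_mul_cancel₀ _ (hcap js).ne']
      have hdivp : v js / μ = (1 + ε) * p js := by
        rw [hμeq, hveq, mul_comm lam ((1 + ε) * p js), mul_div_assoc,
          div_self hlam_pos.ne', mul_one]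
      have hptjs : pt js = (1 + ε) * p js := by
        have : pt js = max (p0 js) (v js / μ) := rfl
        rw [this, hdivp]
        exact max_eq_right (hp0u js)
      refine ⟨hptjs, ?_⟩
      rw [hptjs, hμeq, hveq]
    have hyb : μ * b = ∑ j, v j * y j := by
      rw [hsum_y v, ← hvc_def]
      rcases eq_or_ne t 0 with h | h
      · rw [h, mul_zero, add_zero]
        rw [h, mul_zero] at hptt
        have hbeq : b = vc / μ := by linarith
        rw [hbeq, mul_div_cancel₀ _ hμpos.ne']
      · obtain ⟨-, hveq⟩ := hTcase h
        rw [hveq]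
        have h3 : μ * (pt js * t) = μ * b - vc := by
          rw [hptt, mul_sub, mul_div_cancel₀ _ hμpos.ne']
        nlinarith [h3]
    refine ⟨pt, y, hpt_l, hpt_u, ?_, ?_, ?_, ?_, ?_⟩
    · intro j
      simp only [hy_def]
      have : (0:ℝ) ≤ if j = js then t else 0 := by
        by_cases h : j = js
        · rw [if_pos h]; exact ht
        · rw [if_neg h]
      linarith [hc j]
    · rw [hsum_y pt, hcost, hptt]; linarith
    · intro z hz hzb
      have step1 : ∑ j, v j * z j ≤ ∑ j, (μ * pt j) * z j :=
        Finset.sum_le_sum fun j _ =>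
          mul_le_mul_of_nonneg_right (key_v_le j) (hz j)
      have step2 : ∑ j, (μ * pt j) * z j = μ * ∑ j, pt j * z j := by
        rw [Finset.mul_sum]
        exact Finset.sum_congr rfl fun j _ => by ring
      have step3 : μ * ∑ j, pt j * z j ≤ μ * b :=
        mul_le_mul_of_nonneg_left hzb hμpos.le
      calc ∑ j, v j * z j ≤ μ * b := by rw [step2] at step1; linarith
        _ = ∑ j, v j * y j := hyb
    · intro j
      simp only [hy_def]
      have : (0:ℝ) ≤ if j = js then t else 0 := by
        by_cases h : j = js
        · rw [if_pos h]; exact ht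
        · rw [if_neg h]
      linarith
    · intro j hj
      simp only [hy_def] at hj
      rcases eq_or_ne j js with rfl | h
      · have htpos : t ≠ 0 := by
          intro h0
          rw [h0] at hj; simp at hj
        exact (hTcase htpos).1
      · exfalso; rw [if_neg h] at hj; simp at hj
end

section
/- Consider a budget-additive SPLC utility on m goods: for each good j there are k_j segments with lengths d_{jt} > 0 and strictly decreasing rates u_{j1} > u_{j2} > … > u_{j k_j} ≥ 0, and a cap U > 0; for b > 0 and prices p ∈ ℝ_{>0}^m let G(p) denote the set of optimal solutions of: maximize b·log(Σ_j Σ_t u_{jt} x_{jt}) − Σ_j p_j Σ_t x_{jt} subject to 0 ≤ x_{jt} ≤ d_{jt} for all j, t, and Σ_j Σ_t u_{jt} x_{jt} ≤ U. Then this Gale demand system satisfies the weak gross substitutes property: for any p' ∈ ℝ_{>0}^m with p' ≥ p componentwise and any x ∈ G(p), there exists x' ∈ G(p') such that x'_{jt} ≥ x_{jt} for every segment (j,t) of every good j with p'_j = p_j. -/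
open Finset

/-- The Gale demand system of a budget-additive SPLC utility: the set of optimal
solutions of `max b·log(Σ_j Σ_t u_{jt} x_{jt}) − Σ_j p_j Σ_t x_{jt}` subject to
`0 ≤ x_{jt} ≤ d_{jt}` and `Σ_j Σ_t u_{jt} x_{jt} ≤ U`. -/
def splcGale (m : ℕ) (k : Fin m → ℕ) (d uu : ∀ j : Fin m, Fin (k j) → ℝ)
    (U b : ℝ) (p : Fin m → ℝ) : Set (∀ j : Fin m, Fin (k j) → ℝ) :=
  {x | (∀ j t, 0 ≤ x j t ∧ x j t ≤ d j t) ∧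
    (∑ j, ∑ t, uu j t * x j t ≤ U) ∧ (0 < ∑ j, ∑ t, uu j t * x j t) ∧
    ∀ y : ∀ j : Fin m, Fin (k j) → ℝ, (∀ j t, 0 ≤ y j t ∧ y j t ≤ d j t) →
      (∑ j, ∑ t, uu j t * y j t ≤ U) → (0 < ∑ j, ∑ t, uu j t * y j t) →
      b * Real.log (∑ j, ∑ t, uu j t * y j t) - ∑ j, p j * ∑ t, y j t ≤
        b * Real.log (∑ j, ∑ t, uu j t * x j t) - ∑ j, p j * ∑ t, x j t}

/-!
Optimal bundles are characterised by KKT conditions with a multiplier `λ`, the money value of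
one unit of utility: segments with `q i < λ * u i` are bought in full, segments with
`λ * u i < q i` not at all, and `λ * utility = b` unless the cap `U` binds. Sufficiency follows
from the concavity of `log`; necessity from the first-order conditions along the feasible
directions "raise one segment", "lower one segment" and "trade one segment for another at equal
utility".

Let `x` be optimal at `p` with multiplier `λ`, and let `λ'` be the largest level `l` at which
buying in full every segment with `p' i < l * u i` keeps the utility at most `min U (b / l)`;
since prices only rose, `λ ≤ λ'`. An optimal bundle at `p'` fills those segments, leaves the
segments with `λ' * u i < p' i` empty and, on the tied segments, interpolates from `x` (on goods
whose price is unchanged) up to full until the utility reaches `min U (b / λ')`. The starting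
point is below that target: if `λ < λ'` then `x` is empty on the tied unchanged segments, and if
`λ = λ'` it is dominated by `x`.
-/

open Set Filter Topology

lemma mul_log_sub_mul_log_le {b v w : ℝ} (hb : 0 ≤ b) (hv : 0 < v) (hw : 0 < w) :
    b * Real.log w - b * Real.log v ≤ b / v * (w - v) := by
  have h := Real.log_le_sub_one_of_pos (div_pos hw hv)
  rw [Real.log_div hw.ne' hv.ne'] at h
  calc b * Real.log w - b * Real.log v = b * (Real.log w - Real.log v) := by ring
    _ ≤ b * (w / v - 1) := by gcongr
    _ = b / v * (w - v) := by field_simp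

variable {ι : Type*}

section Optimality

variable [Fintype ι]

def galeFeasible (u d : ι → ℝ) (U : ℝ) : Set (ι → ℝ) :=
  {x | x ∈ Icc 0 d ∧ u ⬝ᵥ x ∈ Ioc 0 U}

noncomputable def galeObjective (u : ι → ℝ) (b : ℝ) (q x : ι → ℝ) : ℝ :=
  b * Real.log (u ⬝ᵥ x) - q ⬝ᵥ x

def IsGaleOptimal (u d : ι → ℝ) (U b : ℝ) (q x : ι → ℝ) : Prop :=
  x ∈ galeFeasible u d U ∧ IsMaxOn (galeObjective u b q) (galeFeasible u d U) x

def IsGaleMultiplier (u d : ι → ℝ) (U b : ℝ) (q x : ι → ℝ) (lam : ℝ) : Prop :=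
  (∀ i, q i < lam * u i → x i = d i) ∧ (∀ i, lam * u i < q i → x i = 0) ∧
    lam * (u ⬝ᵥ x) ≤ b ∧ (u ⬝ᵥ x < U → lam * (u ⬝ᵥ x) = b)

variable {u d q x : ι → ℝ} {U b lam : ℝ}

theorem IsGaleMultiplier.isGaleOptimal (hb : 0 ≤ b) (hx : x ∈ galeFeasible u d U)
    (hlam : IsGaleMultiplier u d U b q x lam) : IsGaleOptimal u d U b q x := by
  obtain ⟨hfull, hzero, hle, heq⟩ := hlam
  refine ⟨hx, fun y hy => ?_⟩
  obtain ⟨⟨hy0, hyd⟩, hVy, hyU⟩ := hy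
  obtain ⟨-, hVx, hxU⟩ := hx
  have hlog := mul_log_sub_mul_log_le hb hVx hVy
  have hcurv : b / (u ⬝ᵥ x) * (u ⬝ᵥ y - u ⬝ᵥ x) ≤ lam * (u ⬝ᵥ y - u ⬝ᵥ x) := by
    rcases hxU.lt_or_eq with hlt | hU
    · rw [← heq hlt, mul_div_cancel_right₀ _ hVx.ne']
    · have : lam ≤ b / (u ⬝ᵥ x) := (le_div_iff₀ hVx).2 hle
      exact mul_le_mul_of_nonpos_right this (by linarith)
  have hprice : lam * (u ⬝ᵥ y - u ⬝ᵥ x) ≤ q ⬝ᵥ y - q ⬝ᵥ x := by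
    simp only [dotProduct, ← Finset.sum_sub_distrib, Finset.mul_sum]
    refine Finset.sum_le_sum fun i _ => ?_
    rcases lt_trichotomy (q i) (lam * u i) with h | h | h
    · rw [hfull i h]; nlinarith [hyd i]
    · rw [h]; linarith
    · rw [hzero i h]; nlinarith [mul_le_mul_of_nonneg_right h.le (hy0 i)]
  show galeObjective u b q y ≤ galeObjective u b q x
  simp only [galeObjective]
  linarith

lemma hasFDerivAt_dotProduct (u x : ι → ℝ) :
    HasFDerivAt (u ⬝ᵥ ·) (LinearMap.toContinuousLinearMap (dotProductBilin ℝ ℝ u)) x :=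
  (LinearMap.toContinuousLinearMap (dotProductBilin ℝ ℝ u)).hasFDerivAt

lemma hasFDerivAt_galeObjective (hx : 0 < u ⬝ᵥ x) :
    HasFDerivAt (galeObjective u b q)
      (b • (u ⬝ᵥ x)⁻¹ • LinearMap.toContinuousLinearMap (dotProductBilin ℝ ℝ u) -
        LinearMap.toContinuousLinearMap (dotProductBilin ℝ ℝ q)) x :=
  (((hasFDerivAt_dotProduct u x).log hx.ne').const_mul b).sub (hasFDerivAt_dotProduct q x)

theorem IsGaleOptimal.mul_dotProduct_le (hx : IsGaleOptimal u d U b q x) {δ : ι → ℝ}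
    (hδ : ∀ᶠ ε in 𝓝[>] (0 : ℝ), x + ε • δ ∈ galeFeasible u d U) :
    b * (u ⬝ᵥ δ) ≤ (q ⬝ᵥ δ) * (u ⬝ᵥ x) := by
  have hV := hx.1.2.1
  have := hx.2.localize.hasFDerivWithinAt_nonpos (hasFDerivAt_galeObjective hV).hasFDerivWithinAt
    (mem_posTangentConeAt_of_frequently_mem hδ.frequently)
  simp only [sub_apply, smul_apply,
    LinearMap.coe_toContinuousLinearMap', dotProductBilin_apply_apply, smul_eq_mul,
    sub_nonpos] at this
  rwa [mul_left_comm, inv_mul_le_iff₀ hV, mul_comm (u ⬝ᵥ x)] at this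

lemma eventually_add_mul_mem_Icc {a c lo hi : ℝ} (ha : a ∈ Icc lo hi) (hlo : c < 0 → lo < a)
    (hhi : 0 < c → a < hi) : ∀ᶠ ε in 𝓝[>] (0 : ℝ), a + ε * c ∈ Icc lo hi := by
  have hcont : Tendsto (fun ε : ℝ => a + ε * c) (𝓝[>] 0) (𝓝 a) := by
    simpa using ((show Continuous fun ε : ℝ => a + ε * c by fun_prop).tendsto 0).mono_left
      nhdsWithin_le_nhds
  rcases lt_trichotomy c 0 with hc | rfl | hc
  · filter_upwards [self_mem_nhdsWithin, hcont.eventually (lt_mem_nhds (hlo hc))]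
      with ε (hε : 0 < ε) h
    exact ⟨h.le, by nlinarith [ha.2]⟩
  · simpa using ha
  · filter_upwards [self_mem_nhdsWithin, hcont.eventually (gt_mem_nhds (hhi hc))]
      with ε (hε : 0 < ε) h
    exact ⟨by nlinarith [ha.1], h.le⟩

lemma eventually_add_smul_mem_galeFeasible (hx : x ∈ galeFeasible u d U) {δ : ι → ℝ}
    (hlo : ∀ i, δ i < 0 → 0 < x i) (hhi : ∀ i, 0 < δ i → x i < d i)
    (hU : 0 < u ⬝ᵥ δ → u ⬝ᵥ x < U) :
    ∀ᶠ ε in 𝓝[>] (0 : ℝ), x + ε • δ ∈ galeFeasible u d U := by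
  obtain ⟨⟨hx0, hxd⟩, hV, hVU⟩ := hx
  have hbox (i : ι) : ∀ᶠ ε in 𝓝[>] (0 : ℝ), x i + ε * δ i ∈ Icc 0 (d i) :=
    eventually_add_mul_mem_Icc ⟨hx0 i, hxd i⟩ (hlo i) (hhi i)
  -- `u ⬝ᵥ x / 2` is just some positive lower bound
  have hutil : ∀ᶠ ε in 𝓝[>] (0 : ℝ), u ⬝ᵥ x + ε * (u ⬝ᵥ δ) ∈ Icc (u ⬝ᵥ x / 2) U :=
    eventually_add_mul_mem_Icc ⟨by linarith, hVU⟩ (fun _ => by linarith) hU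
  filter_upwards [eventually_all.2 hbox, hutil] with ε hε hεV
  simp only [galeFeasible, mem_ofPred_eq, dotProduct_add, dotProduct_smul, smul_eq_mul]
  exact ⟨⟨fun i => (hε i).1, fun i => (hε i).2⟩, by linarith [hεV.1], hεV.2⟩

theorem IsGaleOptimal.mul_le_of_lt_upper (hx : IsGaleOptimal u d U b q x) {i : ι} (hi : x i < d i)
    (hU : u ⬝ᵥ x < U) : b * u i ≤ q i * (u ⬝ᵥ x) := by
  classical
  have := hx.mul_dotProduct_le (δ := Pi.single i 1) <| eventually_add_smul_mem_galeFeasible hx.1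
    (fun j hj => by rw [Pi.single_apply] at hj; split_ifs at hj <;> linarith)
    (fun j hj => by rw [Pi.single_apply] at hj; split_ifs at hj with h <;> [rwa [h]; linarith])
    fun _ => hU
  simpa only [dotProduct_single, mul_one] using this

theorem IsGaleOptimal.mul_le_of_pos (hx : IsGaleOptimal u d U b q x) (hu : 0 ≤ u) {i : ι}
    (hi : 0 < x i) : q i * (u ⬝ᵥ x) ≤ b * u i := by
  classical
  have hui : 0 ≤ u i := hu i
  have := hx.mul_dotProduct_le (δ := -Pi.single i 1) <| eventually_add_smul_mem_galeFeasible hx.1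
    (fun j hj => by
      rw [Pi.neg_apply, Pi.single_apply] at hj; split_ifs at hj with h <;> [rwa [h]; linarith])
    (fun j hj => by rw [Pi.neg_apply, Pi.single_apply] at hj; split_ifs at hj <;> linarith)
    (fun h => by simp only [dotProduct_neg, dotProduct_single] at h; linarith)
  simp only [dotProduct_neg, dotProduct_single, mul_one] at this
  linarith

theorem IsGaleOptimal.mul_le_mul_of_pos_of_lt (hx : IsGaleOptimal u d U b q x) (hu : 0 ≤ u)
    {i j : ι} (hi : 0 < x i) (hj : x j < d j) : q i * u j ≤ q j * u i := by
  classical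
  have hui : 0 ≤ u i := hu i
  have huj : 0 ≤ u j := hu j
  -- trade segment `i` for segment `j` at constant total utility
  set δ : ι → ℝ := u i • Pi.single j 1 - u j • Pi.single i 1
  have hδ (k : ι) : δ k = (if k = j then u i else 0) - (if k = i then u j else 0) := by
    simp [δ, Pi.single_apply]
  have := hx.mul_dotProduct_le (δ := δ) <| eventually_add_smul_mem_galeFeasible hx.1
    (fun k hk => by
      rw [hδ] at hk
      split_ifs at hk <;> subst_vars <;> first | assumption | linarith)
    (fun k hk => by
      rw [hδ] at hk
      split_ifs at hk <;> subst_vars <;> first | assumption | linarith)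
    (fun h => by simp [δ, dotProduct_sub, dotProduct_smul, dotProduct_single, mul_comm] at h)
  simp only [δ, dotProduct_sub, dotProduct_smul, dotProduct_single, smul_eq_mul] at this
  nlinarith [hx.1.2.1]

theorem IsGaleOptimal.exists_isGaleMultiplier (hx : IsGaleOptimal u d U b q x) (hu : 0 ≤ u)
    (hb : 0 < b) (hq : ∀ i, 0 < q i) : ∃ lam, 0 < lam ∧ IsGaleMultiplier u d U b q x lam := by
  classical
  obtain ⟨⟨hx0, hxd⟩, hV, -⟩ := hx.1
  -- the least of `b / (u ⬝ᵥ x)` and the ratios `q j / u j` of the segments that can still grow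
  set S : Finset ℝ := insert (b / (u ⬝ᵥ x))
    ((Finset.univ.filter fun j : ι => x j < d j ∧ 0 < u j).image fun j => q j / u j)
  have hS : S.Nonempty := Finset.insert_nonempty _ _
  set lam := S.min' hS
  have hlam_le_b : lam ≤ b / (u ⬝ᵥ x) := S.min'_le _ (Finset.mem_insert_self _ _)
  have hlam_le_q {j : ι} (hj : x j < d j) (huj : 0 < u j) : lam * u j ≤ q j :=
    (le_div_iff₀ huj).1 <| S.min'_le _ <| Finset.mem_insert_of_mem <|
      Finset.mem_image_of_mem _ (by simp [hj, huj])
  have hlam_pos : 0 < lam := by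
    refine (S.lt_min'_iff hS).2 fun r hr => ?_
    rcases Finset.mem_insert.1 hr with rfl | hr
    · positivity
    · obtain ⟨j, hj, rfl⟩ := Finset.mem_image.1 hr
      exact div_pos (hq j) (Finset.mem_filter.1 hj).2.2
  refine ⟨lam, hlam_pos, fun i hi => ?_, fun i hi => ?_, (le_div_iff₀ hV).1 hlam_le_b,
    fun hU => ?_⟩
  · by_contra hne
    have hui : 0 < u i := pos_of_mul_pos_right ((hq i).trans hi) hlam_pos.le
    linarith [hlam_le_q ((hxd i).lt_of_ne hne) hui]
  · by_contra hne
    have hxi : 0 < x i := (hx0 i).lt_of_ne' hne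
    have hmem : lam ∈ S := S.min'_mem hS
    rcases Finset.mem_insert.1 hmem with hlam | hlam
    · have := hx.mul_le_of_pos hu hxi
      rw [hlam, div_mul_eq_mul_div, div_lt_iff₀ hV] at hi
      linarith
    obtain ⟨j, hj, hqj⟩ := Finset.mem_image.1 hlam
    obtain ⟨hxj, huj⟩ := (Finset.mem_filter.1 hj).2
    have := hx.mul_le_mul_of_pos_of_lt hu hxi hxj
    rw [← hqj, div_mul_eq_mul_div, div_lt_iff₀ huj] at hi
    linarith
  · suffices b / (u ⬝ᵥ x) ≤ lam by rw [le_antisymm hlam_le_b this, div_mul_cancel₀ _ hV.ne']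
    refine S.le_min' hS _ fun r hr => ?_
    obtain rfl | hr := Finset.mem_insert.1 hr
    · exact le_rfl
    obtain ⟨j, hj, rfl⟩ := Finset.mem_image.1 hr
    obtain ⟨hxj, huj⟩ := (Finset.mem_filter.1 hj).2
    exact (div_le_div_iff₀ hV huj).2 (hx.mul_le_of_lt_upper hxj hU)

end Optimality

noncomputable def bundleLT (u d q : ι → ℝ) (l : ℝ) : ι → ℝ :=
  fun i => if q i < l * u i then d i else 0

noncomputable def bundleLE (u d q : ι → ℝ) (l : ℝ) : ι → ℝ :=
  fun i => if q i ≤ l * u i then d i else 0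

noncomputable def lowerBundle (u d q q' x : ι → ℝ) (l : ℝ) : ι → ℝ :=
  fun i => if q' i < l * u i then d i else if q' i = q i then x i else 0

lemma bundleLT_nonneg {u d q : ι → ℝ} (hd : 0 ≤ d) (l : ℝ) : 0 ≤ bundleLT u d q l := fun i => by
  unfold bundleLT; split_ifs; exacts [hd i, le_rfl]

section Levels

variable [Fintype ι]

def admissibleLevels (u d q : ι → ℝ) (U b : ℝ) : Set ℝ :=
  {l | 0 ≤ l ∧ u ⬝ᵥ bundleLT u d q l ≤ U ∧ l * (u ⬝ᵥ bundleLT u d q l) ≤ b}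

variable {u d q : ι → ℝ} {U b : ℝ}

lemma eventually_bundleLT_mem_Icc (hd : 0 ≤ d) (l : ℝ) :
    ∀ᶠ l' in 𝓝 l, bundleLT u d q l' ∈ Icc (bundleLT u d q l) (bundleLE u d q l) := by
  have key (i : ι) : ∀ᶠ l' in 𝓝 l,
      bundleLT u d q l i ≤ bundleLT u d q l' i ∧ bundleLT u d q l' i ≤ bundleLE u d q l i := by
    have hcont : Tendsto (fun l' => l' * u i) (𝓝 l) (𝓝 (l * u i)) := tendsto_id.mul_const _
    have hdi : 0 ≤ d i := hd i
    rcases lt_trichotomy (q i) (l * u i) with h | h | h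
    · filter_upwards [hcont.eventually (lt_mem_nhds h)] with l' h'
      simp [bundleLT, bundleLE, h, h', h.le]
    · refine Eventually.of_forall fun l' => ?_
      simp only [bundleLT, bundleLE, h, lt_irrefl, le_refl, if_false, if_true]
      split_ifs <;> simp [hdi]
    · filter_upwards [hcont.eventually (gt_mem_nhds h)] with l' h'
      simp [bundleLT, bundleLE, not_lt.2 h.le, not_lt.2 h'.le, not_le.2 h]
  filter_upwards [eventually_all.2 key] with l' h'
  exact ⟨fun i => (h' i).1, fun i => (h' i).2⟩

lemma isClosed_admissibleLevels (hu : 0 ≤ u) (hd : 0 ≤ d) :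
    IsClosed (admissibleLevels u d q U b) := by
  refine isClosed_of_closure_subset fun l hl => ?_
  have hl0 : 0 ≤ l := closure_minimal (fun _ h => h.1) isClosed_Ici hl
  set H := u ⬝ᵥ bundleLT u d q l
  have hmono : ∀ᶠ l' in 𝓝 l, H ≤ u ⬝ᵥ bundleLT u d q l' :=
    (eventually_bundleLT_mem_Icc hd l).mono fun _ h =>
      dotProduct_le_dotProduct_of_nonneg_left h.1 hu
  obtain ⟨l₁, hl₁A, hl₁⟩ := ((mem_closure_iff_frequently.1 hl).and_eventually hmono).exists
  refine ⟨hl0, hl₁.trans hl₁A.2.1, ?_⟩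
  by_contra! hbH
  obtain ⟨l₂, ⟨hl₂0, -, hl₂b⟩, hl₂, hl₂H⟩ := ((mem_closure_iff_frequently.1 hl).and_eventually
    (hmono.and ((tendsto_id.mul_const H).eventually (lt_mem_nhds hbH)))).exists
  have := mul_le_mul_of_nonneg_left hl₂ hl₂0
  simp only [id] at hl₂H
  linarith

lemma bddAbove_admissibleLevels (hu : 0 ≤ u) (hd : 0 ≤ d) {i : ι} (hi : 0 < u i * d i) :
    BddAbove (admissibleLevels u d q U b) := by
  refine ⟨max (q i / u i) (b / (u i * d i)), fun l hl => ?_⟩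
  by_contra! h
  have hui : 0 < u i := pos_of_mul_pos_left hi (hd i)
  have hqi : q i < l * u i := (div_lt_iff₀ hui).1 ((le_max_left _ _).trans_lt h)
  have hbl : b < l * (u i * d i) := (div_lt_iff₀ hi).1 ((le_max_right _ _).trans_lt h)
  have hterm : u i * d i ≤ u ⬝ᵥ bundleLT u d q l := by
    have := Finset.single_le_sum (f := fun j => u j * bundleLT u d q l j)
      (fun j _ => mul_nonneg (hu j) (bundleLT_nonneg hd l j)) (Finset.mem_univ i)
    rwa [show bundleLT u d q l i = d i from if_pos hqi] at this
  nlinarith [hl.1, hl.2.2]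

theorem exists_mem_admissibleLevels_min_le (hu : 0 ≤ u) (hd : 0 ≤ d)
    (hbdd : BddAbove (admissibleLevels u d q U b)) {l₀ : ℝ} (hl₀ : l₀ ∈ admissibleLevels u d q U b)
    (hl₀_pos : 0 < l₀) :
    ∃ l ∈ admissibleLevels u d q U b, l₀ ≤ l ∧ min U (b / l) ≤ u ⬝ᵥ bundleLE u d q l := by
  set A := admissibleLevels u d q U b
  set l := sSup A
  have hl₀l : l₀ ≤ l := le_csSup hbdd hl₀
  have hl_pos : 0 < l := hl₀_pos.trans_le hl₀l
  refine ⟨l, (isClosed_admissibleLevels hu hd).csSup_mem ⟨l₀, hl₀⟩ hbdd, hl₀l, ?_⟩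
  by_contra! h
  set W := u ⬝ᵥ bundleLE u d q l
  have hWU : W < U := h.trans_le (min_le_left _ _)
  have hWb : l * W < b := (lt_div_iff₀' hl_pos).1 (h.trans_le (min_le_right _ _))
  have hA : ∀ᶠ l' in 𝓝 l, l' ∈ A := by
    filter_upwards [eventually_bundleLT_mem_Icc hd l,
      (tendsto_id.mul_const W).eventually (gt_mem_nhds hWb), lt_mem_nhds hl_pos]
      with l' hl' hl'W hl'0
    have hle : u ⬝ᵥ bundleLT u d q l' ≤ W := dotProduct_le_dotProduct_of_nonneg_left hl'.2 hu
    exact ⟨hl'0.le, hle.trans hWU.le, (mul_le_mul_of_nonneg_left hle hl'0.le).trans hl'W.le⟩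
  obtain ⟨l', hll', hl'A⟩ := hA.exists_gt
  exact (le_csSup hbdd hl'A).not_gt hll'

end Levels

section Interpolation

variable [Fintype ι] {u d q q' x lo hi : ι → ℝ} {U b lam l : ℝ}

theorem exists_isGaleOptimal_ge (hb : 0 < b) (hU : 0 < U) (hlam : 0 < lam) (hlo0 : 0 ≤ lo)
    (hlohi : lo ≤ hi) (hhid : hi ≤ d) (hlod : ∀ i, q i < lam * u i → lo i = d i)
    (hhi0 : ∀ i, lam * u i < q i → hi i = 0) (hlo : u ⬝ᵥ lo ≤ min U (b / lam))
    (hhi : min U (b / lam) ≤ u ⬝ᵥ hi) :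
    ∃ z, IsGaleOptimal u d U b q z ∧ lo ≤ z := by
  obtain ⟨z, hz, hzV : u ⬝ᵥ z = min U (b / lam)⟩ :
      min U (b / lam) ∈ (u ⬝ᵥ ·) '' segment ℝ lo hi := by
    have h := image_segment ℝ (dotProductBilin ℝ ℝ u).toAffineMap lo hi
    change (u ⬝ᵥ ·) '' _ = segment ℝ (u ⬝ᵥ lo) (u ⬝ᵥ hi) at h
    rw [h, segment_eq_Icc (hlo.trans hhi)]
    exact ⟨hlo, hhi⟩
  obtain ⟨hloz, hzhi⟩ := segment_subset_Icc hlohi hz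
  have hz : z ∈ galeFeasible u d U :=
    ⟨⟨hlo0.trans hloz, hzhi.trans hhid⟩, hzV ▸ lt_min hU (div_pos hb hlam), hzV ▸ min_le_left _ _⟩
  have hmult : IsGaleMultiplier u d U b q z lam := by
    refine ⟨fun i h => le_antisymm (hzhi.trans hhid i) (hlod i h ▸ hloz i),
      fun i h => le_antisymm (hhi0 i h ▸ hzhi i) (hlo0.trans hloz i), ?_, fun h => ?_⟩
    · rw [hzV, ← le_div_iff₀' hlam]
      exact min_le_right _ _
    · rw [hzV] at h ⊢
      rw [min_eq_right (min_lt_iff.1 h |>.resolve_left (lt_irrefl U)).le,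
        mul_div_cancel₀ _ hlam.ne']
  exact ⟨z, hmult.isGaleOptimal hb.le hz, hloz⟩

lemma IsGaleMultiplier.mem_admissibleLevels (hmult : IsGaleMultiplier u d U b q x lam)
    (hx : x ∈ galeFeasible u d U) (hu : 0 ≤ u) (hlam : 0 ≤ lam) (hqq' : q ≤ q') :
    lam ∈ admissibleLevels u d q' U b := by
  have hle : u ⬝ᵥ bundleLT u d q' lam ≤ u ⬝ᵥ x := by
    refine dotProduct_le_dotProduct_of_nonneg_left (fun i => ?_) hu
    unfold bundleLT
    split_ifs with h
    exacts [(hmult.1 i ((hqq' i).trans_lt h)).ge, hx.1.1 i]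
  exact ⟨hlam, hle.trans hx.2.2, (mul_le_mul_of_nonneg_left hle hlam).trans hmult.2.2.1⟩

lemma IsGaleMultiplier.lowerBundle_le_bundleLE (hmult : IsGaleMultiplier u d U b q x lam)
    (hx : x ∈ galeFeasible u d U) (hu : 0 ≤ u) (hlam : lam ≤ l) :
    lowerBundle u d q q' x l ≤ bundleLE u d q' l := fun i => by
  have hd : 0 ≤ d := hx.1.1.trans hx.1.2
  by_cases h1 : q' i < l * u i
  · simp [lowerBundle, bundleLE, h1, h1.le]
  by_cases h3 : q' i ≤ l * u i
  · simp only [lowerBundle, bundleLE, h1, h3, if_false, if_true]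
    split_ifs
    exacts [hx.1.2 i, hd i]
  · simp only [lowerBundle, bundleLE, h1, h3, if_false]
    split_ifs with h2
    · exact (hmult.2.1 i ((mul_le_mul_of_nonneg_right hlam (hu i)).trans_lt
        (h2 ▸ not_le.1 h3))).le
    · exact le_rfl

lemma IsGaleMultiplier.dotProduct_lowerBundle_le (hmult : IsGaleMultiplier u d U b q x lam)
    (hx : x ∈ galeFeasible u d U) (hu : 0 ≤ u) (hq : ∀ i, 0 < q i) (hqq' : q ≤ q')
    (hlam : lam ≤ l) (hl : l ∈ admissibleLevels u d q' U b) (hl0 : 0 < l) :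
    u ⬝ᵥ lowerBundle u d q q' x l ≤ min U (b / l) := by
  rcases hlam.lt_or_eq with hlt | rfl
  · -- segments tied at the higher level `l` were not bought at the old level
    have hle : lowerBundle u d q q' x l ≤ bundleLT u d q' l := fun i => by
      unfold lowerBundle bundleLT
      split_ifs with h1 h2
      · exact le_rfl
      · have : lam * u i < q i := by
          rcases (show 0 ≤ u i from hu i).lt_or_eq with hui | hui
          · exact (mul_lt_mul_of_pos_right hlt hui).trans_le (h2 ▸ not_lt.1 h1)
          · rw [← hui, mul_zero]; exact hq i
        exact (hmult.2.1 i this).le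
      · exact le_rfl
    calc u ⬝ᵥ lowerBundle u d q q' x l ≤ u ⬝ᵥ bundleLT u d q' l :=
          dotProduct_le_dotProduct_of_nonneg_left hle hu
      _ ≤ min U (b / l) := le_min hl.2.1 ((le_div_iff₀' hl0).2 hl.2.2)
  · have hle : lowerBundle u d q q' x lam ≤ x := fun i => by
      unfold lowerBundle
      split_ifs with h1 h2
      exacts [(hmult.1 i ((hqq' i).trans_lt h1)).ge, le_rfl, hx.1.1 i]
    calc u ⬝ᵥ lowerBundle u d q q' x lam ≤ u ⬝ᵥ x :=
          dotProduct_le_dotProduct_of_nonneg_left hle hu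
      _ ≤ min U (b / lam) := le_min hx.2.2 ((le_div_iff₀' hl0).2 hmult.2.2.1)

theorem IsGaleOptimal.exists_isGaleOptimal_of_le (hx : IsGaleOptimal u d U b q x) (hu : 0 ≤ u)
    (hb : 0 < b) (hq : ∀ i, 0 < q i) (hqq' : q ≤ q') :
    ∃ x', IsGaleOptimal u d U b q' x' ∧ ∀ i, q' i = q i → x i ≤ x' i := by
  obtain ⟨⟨hx0, hxd⟩, hV, hVU⟩ := hx.1
  have hd : 0 ≤ d := hx0.trans hxd
  obtain ⟨lam, hlam, hmult⟩ := hx.exists_isGaleMultiplier hu hb hq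
  obtain ⟨i, -, hi⟩ : ∃ i ∈ Finset.univ, (0 : ℝ) < u i * x i :=
    Finset.exists_lt_of_sum_lt (f := fun _ => 0) (by simpa [dotProduct] using hV)
  have hbdd := bddAbove_admissibleLevels (q := q') (U := U) (b := b) hu hd
    (hi.trans_le (mul_le_mul_of_nonneg_left (hxd i) (hu i)))
  obtain ⟨l, hl, hlam_l, hmin⟩ := exists_mem_admissibleLevels_min_le hu hd hbdd
    (hmult.mem_admissibleLevels hx.1 hu hlam.le hqq') hlam
  have hl0 : 0 < l := hlam.trans_le hlam_l
  obtain ⟨z, hz, hlo⟩ := exists_isGaleOptimal_ge hb (hV.trans_le hVU) hl0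
    (fun i => by unfold lowerBundle; split_ifs; exacts [hd i, hx0 i, le_rfl])
    (hmult.lowerBundle_le_bundleLE hx.1 hu hlam_l)
    (fun i => by unfold bundleLE; split_ifs; exacts [le_rfl, hd i])
    (fun i h => if_pos h) (fun i h => if_neg (not_le.2 h))
    (hmult.dotProduct_lowerBundle_le hx.1 hu hq hqq' hlam_l hl hl0) hmin
  refine ⟨z, hz, fun i hi => le_trans ?_ (hlo i)⟩
  unfold lowerBundle
  split_ifs
  exacts [hxd i, le_rfl]

end Interpolation

section

variable {α : Type*} [Fintype α] {β : α → Type*} [∀ a, Fintype (β a)]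

lemma uncurry_dotProduct_uncurry (v w : ∀ a, β a → ℝ) :
    Sigma.uncurry v ⬝ᵥ Sigma.uncurry w = ∑ a, ∑ t, v a t * w a t :=
  Fintype.sum_sigma' fun a t => v a t * w a t

lemma dotProduct_uncurry (p : α → ℝ) (w : ∀ a, β a → ℝ) :
    (fun s : Sigma β => p s.1) ⬝ᵥ Sigma.uncurry w = ∑ a, p a * ∑ t, w a t := by
  simp only [Finset.mul_sum]
  exact Fintype.sum_sigma' fun a t => p a * w a t

end

theorem isGaleOptimal_uncurry_iff {m : ℕ} {k : Fin m → ℕ} {d uu x : ∀ j : Fin m, Fin (k j) → ℝ}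
    {U b : ℝ} {p : Fin m → ℝ} :
    IsGaleOptimal (Sigma.uncurry uu) (Sigma.uncurry d) U b (fun s => p s.1) (Sigma.uncurry x) ↔
      x ∈ splcGale m k d uu U b p := by
  have hfeas (y : ∀ j : Fin m, Fin (k j) → ℝ) :
      Sigma.uncurry y ∈ galeFeasible (Sigma.uncurry uu) (Sigma.uncurry d) U ↔
        (∀ j t, 0 ≤ y j t ∧ y j t ≤ d j t) ∧ ∑ j, ∑ t, uu j t * y j t ≤ U ∧
          0 < ∑ j, ∑ t, uu j t * y j t := by
    simp only [galeFeasible, Set.mem_ofPred_eq, Set.mem_Icc, Set.mem_Ioc, Pi.le_def,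
      Sigma.forall, uncurry_dotProduct_uncurry]
    exact ⟨fun ⟨⟨h0, hd⟩, hV, hU⟩ => ⟨fun j t => ⟨h0 j t, hd j t⟩, hU, hV⟩,
      fun ⟨h, hU, hV⟩ => ⟨⟨fun j t => (h j t).1, fun j t => (h j t).2⟩, hV, hU⟩⟩
  have hobj (y : ∀ j : Fin m, Fin (k j) → ℝ) :
      galeObjective (Sigma.uncurry uu) b (fun s => p s.1) (Sigma.uncurry y) =
        b * Real.log (∑ j, ∑ t, uu j t * y j t) - ∑ j, p j * ∑ t, y j t := by
    rw [galeObjective, uncurry_dotProduct_uncurry, dotProduct_uncurry]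
  have huncurry : Function.Surjective
      (Sigma.uncurry : (∀ j : Fin m, Fin (k j) → ℝ) → (Σ j, Fin (k j)) → ℝ) :=
    fun z => ⟨Sigma.curry z, Sigma.uncurry_curry (γ := fun _ _ => ℝ) z⟩
  unfold IsGaleOptimal splcGale
  rw [hfeas, isMaxOn_iff, huncurry.forall]
  simp only [hfeas, hobj, Set.mem_ofPred_eq, and_imp, and_assoc]

theorem splc_gale_wgs_general
    (m : ℕ) (k : Fin m → ℕ) (d uu : ∀ j : Fin m, Fin (k j) → ℝ)
    (huu0 : ∀ j t, 0 ≤ uu j t)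
    (U : ℝ) (b : ℝ) (hb : 0 < b)
    (p p' : Fin m → ℝ) (hp : ∀ j, 0 < p j) (hpp' : ∀ j, p j ≤ p' j)
    (x : ∀ j : Fin m, Fin (k j) → ℝ) (hx : x ∈ splcGale m k d uu U b p) :
    ∃ x' ∈ splcGale m k d uu U b p', ∀ j, p' j = p j → ∀ t, x j t ≤ x' j t := by
  obtain ⟨x', hx', hle⟩ := (isGaleOptimal_uncurry_iff.2 hx).exists_isGaleOptimal_of_le
    (fun s => huu0 s.1 s.2) hb (fun s => hp s.1) (fun s => hpp' s.1)
  refine ⟨Sigma.curry x', isGaleOptimal_uncurry_iff.1 ?_, fun j hj t => hle ⟨j, t⟩ hj⟩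
  rwa [Sigma.uncurry_curry]

/-- Lemma 6.1. The Gale demand system of a budget-additive SPLC
utility (segments of lengths `d_{jt} > 0` with strictly decreasing nonnegative rates and
cap `U > 0`) satisfies the weak gross substitutes property: if prices increase
componentwise from `p` to `p'`, then for any optimal bundle `x` at `p` there is an
optimal bundle `x'` at `p'` with `x'_{jt} ≥ x_{jt}` on every segment of every good whose
price is unchanged. -/
theorem splc_gale_wgs
    (m : ℕ) (k : Fin m → ℕ) (d uu : ∀ j : Fin m, Fin (k j) → ℝ)
    (hd : ∀ j t, 0 < d j t) (huu0 : ∀ j t, 0 ≤ uu j t)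
    (huu_dec : ∀ j, StrictAnti (uu j))
    (U : ℝ) (hU : 0 < U) (b : ℝ) (hb : 0 < b)
    (p p' : Fin m → ℝ) (hp : ∀ j, 0 < p j) (hpp' : ∀ j, p j ≤ p' j)
    (x : ∀ j : Fin m, Fin (k j) → ℝ) (hx : x ∈ splcGale m k d uu U b p) :
    ∃ x' ∈ splcGale m k d uu U b p', ∀ j, p' j = p j → ∀ t, x j t ≤ x' j t :=
  splc_gale_wgs_general m k d uu huu0 U b hb p p' hp hpp' x hx
end

section
/- Fix m goods, where good j has k_j segments with lengths d_{jt} ≥ 0 and rates u_{jt} ≥ 0, prices p ∈ ℝ_{>0}^m, and a target utility ū for which the program is feasible. Consider the knapsack linear program: minimize Σ_j p_j Σ_t x_{jt} subject to 0 ≤ x_{jt} ≤ d_{jt} for all j, t and Σ_j Σ_t u_{jt} x_{jt} = ū. Then its optimal solutions satisfy the weak gross substitutes property: if p' ∈ ℝ_{>0}^m with p' ≥ p componentwise and x is an optimal solution at prices p, then there exists an optimal solution x' at prices p' with x'_{jt} ≥ x_{jt} for every segment (j,t) of every good j with p'_j = p_j. -/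
/-!
Take `z` optimal at the new prices `p'` and, among those, closest to `x` in `ℓ¹`. If
`z_s < x_s` on a segment `s` whose price did not change, move `z` a little towards `x`: raise
`z_s` and, to keep the utility fixed, lower `z_{s'}` on a segment where `z_{s'} > x_{s'}`
(one exists unless `u_s = 0`, in which case no compensation is needed). The opposite move
applied to `x` is feasible, so optimality of `x` at `p` says the move does not increase the cost
at `p`; since only the lowered segment can have a higher price under `p'`, it does not increase
the cost at `p'` either. The moved point is then optimal at `p'` and closer to `x`.
-/

open Finset Matrix

theorem IsCompact.exists_isMinOn_isMinOn {α β γ : Type*} [TopologicalSpace α]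
    [LinearOrder β] [TopologicalSpace β] [ClosedIicTopology β]
    [LinearOrder γ] [TopologicalSpace γ] [ClosedIicTopology γ]
    {K : Set α} (hK : IsCompact K) (hne : K.Nonempty) {f : α → β} {g : α → γ}
    (hf : Continuous f) (hg : Continuous g) :
    ∃ z ∈ K, IsMinOn f K z ∧ IsMinOn g {y ∈ K | IsMinOn f K y} z := by
  obtain ⟨z₀, hz₀K, hz₀⟩ := hK.exists_isMinOn hne hf.continuousOn
  have hargmin : {y ∈ K | IsMinOn f K y} = K ∩ f ⁻¹' Set.Iic (f z₀) := by
    ext y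
    exact ⟨fun ⟨hy, hmin⟩ => ⟨hy, hmin hz₀K⟩,
      fun ⟨hy, hle⟩ => ⟨hy, fun w hw => le_trans hle (hz₀ hw)⟩⟩
  have hcompact : IsCompact {y ∈ K | IsMinOn f K y} := by
    rw [hargmin]
    exact hK.inter_right (isClosed_Iic.preimage hf)
  obtain ⟨z, ⟨hzK, hzf⟩, hzg⟩ :=
    hcompact.exists_isMinOn ⟨z₀, hz₀K, hz₀⟩ hg.continuousOn
  exact ⟨z, hzK, hzf, hzg⟩

lemma add_mem_uIcc_of_mem_uIcc_sub {a b c : ℝ} (hc : c ∈ Set.uIcc 0 (b - a)) :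
    a + c ∈ Set.uIcc a b ∧ b - c ∈ Set.uIcc a b := by
  simp only [Set.mem_uIcc] at hc ⊢
  rcases hc with hc | hc
  · exact ⟨Or.inl ⟨by linarith, by linarith⟩, Or.inl ⟨by linarith, by linarith⟩⟩
  · exact ⟨Or.inr ⟨by linarith, by linarith⟩, Or.inr ⟨by linarith, by linarith⟩⟩

lemma abs_sub_eq_abs_sub_abs_of_mem_uIcc {c d : ℝ} (hc : c ∈ Set.uIcc 0 d) :
    |d - c| = |d| - |c| := by
  rcases Set.mem_uIcc.1 hc with hc | hc
  · rw [abs_of_nonneg (by linarith), abs_of_nonneg (by linarith), abs_of_nonneg hc.1]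
  · rw [abs_of_nonpos (by linarith), abs_of_nonpos (by linarith), abs_of_nonpos hc.2]
    ring

section Knapsack

variable {ι : Type*} [Fintype ι] {D U P P' X z v : ι → ℝ} {ubar : ℝ}

def knapsackPolytope (D U : ι → ℝ) (ubar : ℝ) : Set (ι → ℝ) :=
  Set.univ.pi (fun s => Set.Icc 0 (D s)) ∩ {w | U ⬝ᵥ w = ubar}

lemma isCompact_knapsackPolytope : IsCompact (knapsackPolytope D U ubar) :=
  (isCompact_univ_pi fun _ => isCompact_Icc).inter_right
    (isClosed_eq (by fun_prop) continuous_const)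

lemma add_mem_knapsackPolytope {w y : ι → ℝ} (hw : w ∈ knapsackPolytope D U ubar)
    (hy : y ∈ knapsackPolytope D U ubar) (hUv : U ⬝ᵥ v = 0)
    (hv : ∀ s, v s ∈ Set.uIcc 0 (y s - w s)) :
    w + v ∈ knapsackPolytope D U ubar ∧ y - v ∈ knapsackPolytope D U ubar := by
  obtain ⟨hwD, hwU⟩ := hw
  obtain ⟨hyD, hyU⟩ := hy
  have hbox (s : ι) := Set.uIcc_subset_Icc (hwD s (Set.mem_univ s)) (hyD s (Set.mem_univ s))
  refine ⟨⟨fun s _ => hbox s (add_mem_uIcc_of_mem_uIcc_sub (hv s)).1, ?_⟩,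
    ⟨fun s _ => hbox s (add_mem_uIcc_of_mem_uIcc_sub (hv s)).2, ?_⟩⟩
  · change U ⬝ᵥ (w + v) = ubar
    rw [dotProduct_add, hwU, hUv, add_zero]
  · change U ⬝ᵥ (y - v) = ubar
    rw [dotProduct_sub, hyU, hUv, sub_zero]

lemma isMinOn_add_of_mem_uIcc (hPP' : P ≤ P') (hX : X ∈ knapsackPolytope D U ubar)
    (hXmin : IsMinOn (P ⬝ᵥ ·) (knapsackPolytope D U ubar) X)
    (hz : z ∈ knapsackPolytope D U ubar)
    (hzmin : IsMinOn (P' ⬝ᵥ ·) (knapsackPolytope D U ubar) z)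
    (hUv : U ⬝ᵥ v = 0) (hv : ∀ s, v s ∈ Set.uIcc 0 (X s - z s))
    (hv_nonpos : ∀ s, P s ≠ P' s → v s ≤ 0) :
    IsMinOn (P' ⬝ᵥ ·) (knapsackPolytope D U ubar) (z + v) := by
  have hPv : P ⬝ᵥ v ≤ 0 := by
    have : P ⬝ᵥ X ≤ P ⬝ᵥ (X - v) := hXmin (add_mem_knapsackPolytope hz hX hUv hv).2
    rw [dotProduct_sub] at this
    linarith
  have hP'v : P' ⬝ᵥ v ≤ P ⬝ᵥ v := Finset.sum_le_sum fun s _ => by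
    rcases eq_or_ne (P s) (P' s) with h | h
    · rw [h]
    · exact mul_le_mul_of_nonpos_right (hPP' s) (hv_nonpos s h)
  refine isMinOn_iff.2 fun y hy => ?_
  calc P' ⬝ᵥ (z + v) = P' ⬝ᵥ z + P' ⬝ᵥ v := dotProduct_add _ _ _
    _ ≤ P' ⬝ᵥ z := by linarith
    _ ≤ P' ⬝ᵥ y := hzmin hy

lemma exists_exchange_move {d : ι → ℝ} {s₀ s₁ : ι} (hne : s₁ ≠ s₀) (hU₀ : 0 < U s₀)
    (hU₁ : 0 < U s₁) (hd₀ : 0 < d s₀) (hd₁ : d s₁ < 0) :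
    ∃ v : ι → ℝ, U ⬝ᵥ v = 0 ∧ (∀ s, v s ∈ Set.uIcc 0 (d s)) ∧ (∀ s ≠ s₀, v s ≤ 0) ∧
      v s₀ ≠ 0 := by
  classical
  set t := min (d s₀ / U s₁) (-d s₁ / U s₀)
  have ht : 0 < t := lt_min (div_pos hd₀ hU₁) (div_pos (neg_pos.2 hd₁) hU₀)
  have ht₀ : t * U s₁ ≤ d s₀ := (le_div_iff₀ hU₁).1 (min_le_left _ _)
  have ht₁ : t * U s₀ ≤ -d s₁ := (le_div_iff₀ hU₀).1 (min_le_right _ _)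
  refine ⟨Pi.single s₀ (t * U s₁) - Pi.single s₁ (t * U s₀), ?_, fun s => ?_, fun s hs => ?_, ?_⟩
  · simp only [dotProduct_sub, dotProduct_single]
    ring
  · rcases eq_or_ne s s₀ with rfl | hs
    · simp only [Pi.sub_apply, Pi.single_eq_same, Pi.single_eq_of_ne hne.symm, sub_zero]
      exact Set.mem_uIcc.2 (Or.inl ⟨by positivity, ht₀⟩)
    rcases eq_or_ne s s₁ with rfl | hs'
    · simp only [Pi.sub_apply, Pi.single_eq_same, Pi.single_eq_of_ne hs, zero_sub]
      exact Set.mem_uIcc.2 (Or.inr ⟨by linarith, by linarith [mul_pos ht hU₀]⟩)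
    · simp [hs, hs']
  · rcases eq_or_ne s s₁ with rfl | hs'
    · simp [hs, mul_nonneg ht.le hU₀.le]
    · simp [hs, hs']
  · simp [Pi.single_eq_of_ne hne.symm, ht.ne', hU₁.ne']

lemma exists_utility_neutral_move (hU : 0 ≤ U) {d : ι → ℝ} (hd : U ⬝ᵥ d = 0) {s₀ : ι}
    (hs₀ : 0 < d s₀) :
    ∃ v : ι → ℝ, U ⬝ᵥ v = 0 ∧ (∀ s, v s ∈ Set.uIcc 0 (d s)) ∧ (∀ s ≠ s₀, v s ≤ 0) ∧
      v s₀ ≠ 0 := by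
  classical
  rcases (hU s₀).eq_or_lt with hU₀ | hU₀
  · refine ⟨Pi.single s₀ (d s₀), by simp [← hU₀], fun s => ?_, fun s hs => by simp [hs],
      by simp [hs₀.ne']⟩
    rcases eq_or_ne s s₀ with rfl | hs
    · simp
    · simp [hs]
  obtain ⟨s₁, hs₁⟩ : ∃ s₁, U s₁ * d s₁ < 0 := by
    by_contra! h
    have : 0 < U ⬝ᵥ d := Finset.sum_pos' (fun s _ => h s) ⟨s₀, mem_univ _, mul_pos hU₀ hs₀⟩
    linarith
  have hd₁ : d s₁ < 0 := neg_of_mul_neg_right hs₁ (hU s₁)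
  have hU₁ : 0 < U s₁ := (hU s₁).lt_of_ne fun h => by simp [← h] at hs₁
  exact exists_exchange_move (by rintro rfl; linarith) hU₀ hU₁ hs₀ hd₁

theorem exists_isMinOn_knapsackPolytope_le (hU : 0 ≤ U) (hPP' : P ≤ P')
    (hX : X ∈ knapsackPolytope D U ubar)
    (hXmin : IsMinOn (P ⬝ᵥ ·) (knapsackPolytope D U ubar) X) :
    ∃ z ∈ knapsackPolytope D U ubar, IsMinOn (P' ⬝ᵥ ·) (knapsackPolytope D U ubar) z ∧
      ∀ s, P' s = P s → X s ≤ z s := by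
  obtain ⟨z, hz, hzmin, hzclosest⟩ :=
    isCompact_knapsackPolytope.exists_isMinOn_isMinOn ⟨X, hX⟩ (f := (P' ⬝ᵥ ·))
      (g := fun w => ∑ s, |X s - w s|) (by fun_prop) (by fun_prop)
  refine ⟨z, hz, hzmin, fun s₀ hs₀ => not_lt.1 fun hlt => ?_⟩
  have hUd : U ⬝ᵥ (X - z) = 0 := by rw [dotProduct_sub, hX.2, hz.2, sub_self]
  obtain ⟨v, hUv, hv, hv_nonpos, hvs₀⟩ := exists_utility_neutral_move hU hUd (sub_pos.2 hlt)
  replace hv : ∀ s, v s ∈ Set.uIcc 0 (X s - z s) := hv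
  have hzv : IsMinOn (P' ⬝ᵥ ·) (knapsackPolytope D U ubar) (z + v) :=
    isMinOn_add_of_mem_uIcc hPP' hX hXmin hz hzmin hUv hv
      fun s hs => hv_nonpos s fun h => hs (h ▸ hs₀.symm)
  have hcloser : ∑ s, |X s - (z + v) s| < ∑ s, |X s - z s| := by
    refine Finset.sum_lt_sum (fun s _ => ?_) ⟨s₀, mem_univ _, ?_⟩ <;>
      rw [Pi.add_apply, ← sub_sub, abs_sub_eq_abs_sub_abs_of_mem_uIcc (hv _)]
    · linarith [abs_nonneg (v s)]
    · linarith [abs_pos.2 hvs₀]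
  exact (hzclosest ⟨(add_mem_knapsackPolytope hz hX hUv hv).1, hzv⟩).not_gt hcloser

end Knapsack

section Curry

variable {α : Type*} {β : α → Type*} [Fintype α] [∀ a, Fintype (β a)]

lemma sum_mul_sum_eq_dotProduct_uncurry (q : α → ℝ) (y : ∀ a, β a → ℝ) :
    ∑ a, q a * ∑ b, y a b = (fun s : Σ a, β a => q s.1) ⬝ᵥ Sigma.uncurry y := by
  simp only [dotProduct, Fintype.sum_sigma, Finset.mul_sum, Sigma.uncurry]

lemma uncurry_mem_knapsackPolytope_iff (d u y : ∀ a, β a → ℝ) (ubar : ℝ) :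
    Sigma.uncurry y ∈ knapsackPolytope (Sigma.uncurry d) (Sigma.uncurry u) ubar ↔
      (∀ a b, 0 ≤ y a b ∧ y a b ≤ d a b) ∧ ∑ a, ∑ b, u a b * y a b = ubar := by
  simp only [knapsackPolytope, Set.mem_inter_iff, Set.mem_univ_pi, Set.mem_Icc,
    Set.mem_ofPred_eq, dotProduct, Fintype.sum_sigma, Sigma.uncurry, Sigma.forall]

end Curry

theorem knapsack_lp_wgs_general
    (m : ℕ) (k : Fin m → ℕ) (d uu : ∀ j : Fin m, Fin (k j) → ℝ)
    (huu : ∀ j t, 0 ≤ uu j t)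
    (p p' : Fin m → ℝ)
    (hpp' : ∀ j, p j ≤ p' j)
    (ubar : ℝ)
    (x : ∀ j : Fin m, Fin (k j) → ℝ)
    (hx_box : ∀ j t, 0 ≤ x j t ∧ x j t ≤ d j t)
    (hx_util : ∑ j, ∑ t, uu j t * x j t = ubar)
    (hx_opt : ∀ y : ∀ j : Fin m, Fin (k j) → ℝ,
      (∀ j t, 0 ≤ y j t ∧ y j t ≤ d j t) → (∑ j, ∑ t, uu j t * y j t = ubar) →
      ∑ j, p j * ∑ t, x j t ≤ ∑ j, p j * ∑ t, y j t) :
    ∃ x' : ∀ j : Fin m, Fin (k j) → ℝ,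
      (∀ j t, 0 ≤ x' j t ∧ x' j t ≤ d j t) ∧
      (∑ j, ∑ t, uu j t * x' j t = ubar) ∧
      (∀ y : ∀ j : Fin m, Fin (k j) → ℝ,
        (∀ j t, 0 ≤ y j t ∧ y j t ≤ d j t) → (∑ j, ∑ t, uu j t * y j t = ubar) →
        ∑ j, p' j * ∑ t, x' j t ≤ ∑ j, p' j * ∑ t, y j t) ∧
      (∀ j, p' j = p j → ∀ t, x j t ≤ x' j t) := by
  let K := knapsackPolytope (Sigma.uncurry d) (Sigma.uncurry uu) ubar
  have hX : Sigma.uncurry x ∈ K :=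
    (uncurry_mem_knapsackPolytope_iff d uu x ubar).2 ⟨hx_box, hx_util⟩
  have hXmin : IsMinOn ((fun s => p s.1) ⬝ᵥ ·) K (Sigma.uncurry x) := isMinOn_iff.2 fun w hw => by
    rw [← Sigma.uncurry_curry (γ := fun _ _ => ℝ) w] at hw ⊢
    obtain ⟨hwb, hwu⟩ := (uncurry_mem_knapsackPolytope_iff d uu _ ubar).1 hw
    simpa only [sum_mul_sum_eq_dotProduct_uncurry] using hx_opt _ hwb hwu
  obtain ⟨z, hz, hzmin, hzge⟩ := exists_isMinOn_knapsackPolytope_le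
    (U := Sigma.uncurry uu) (P' := fun s => p' s.1) (fun s => huu s.1 s.2) (fun s => hpp' s.1)
    hX hXmin
  rw [← Sigma.uncurry_curry (γ := fun _ _ => ℝ) z] at hz hzmin
  obtain ⟨hzb, hzu⟩ := (uncurry_mem_knapsackPolytope_iff d uu _ ubar).1 hz
  refine ⟨Sigma.curry z, hzb, hzu, fun y hyb hyu => ?_, fun j hj t => hzge ⟨j, t⟩ hj⟩
  simp only [sum_mul_sum_eq_dotProduct_uncurry]
  exact hzmin ((uncurry_mem_knapsackPolytope_iff d uu y ubar).2 ⟨hyb, hyu⟩)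

/-- The optimal solutions of the knapsack linear program
`min Σ_j p_j Σ_t x_{jt}` subject to `0 ≤ x_{jt} ≤ d_{jt}` and
`Σ_j Σ_t u_{jt} x_{jt} = ū` satisfy the weak gross substitutes property: if prices
increase componentwise to `p' ≥ p`, then for any optimal solution `x` at `p` there is an
optimal solution `x'` at `p'` with `x'_{jt} ≥ x_{jt}` on every segment of every good
whose price is unchanged. -/
theorem knapsack_lp_wgs
    (m : ℕ) (k : Fin m → ℕ) (d uu : ∀ j : Fin m, Fin (k j) → ℝ)
    (hd : ∀ j t, 0 ≤ d j t) (huu : ∀ j t, 0 ≤ uu j t)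
    (p p' : Fin m → ℝ) (hp : ∀ j, 0 < p j) (hp' : ∀ j, 0 < p' j)
    (hpp' : ∀ j, p j ≤ p' j)
    (ubar : ℝ)
    (x : ∀ j : Fin m, Fin (k j) → ℝ)
    (hx_box : ∀ j t, 0 ≤ x j t ∧ x j t ≤ d j t)
    (hx_util : ∑ j, ∑ t, uu j t * x j t = ubar)
    (hx_opt : ∀ y : ∀ j : Fin m, Fin (k j) → ℝ,
      (∀ j t, 0 ≤ y j t ∧ y j t ≤ d j t) → (∑ j, ∑ t, uu j t * y j t = ubar) →
      ∑ j, p j * ∑ t, x j t ≤ ∑ j, p j * ∑ t, y j t) :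
    ∃ x' : ∀ j : Fin m, Fin (k j) → ℝ,
      (∀ j t, 0 ≤ x' j t ∧ x' j t ≤ d j t) ∧
      (∑ j, ∑ t, uu j t * x' j t = ubar) ∧
      (∀ y : ∀ j : Fin m, Fin (k j) → ℝ,
        (∀ j t, 0 ≤ y j t ∧ y j t ≤ d j t) → (∑ j, ∑ t, uu j t * y j t = ubar) →
        ∑ j, p' j * ∑ t, x' j t ≤ ∑ j, p' j * ∑ t, y j t) ∧
      (∀ j, p' j = p j → ∀ t, x j t ≤ x' j t) :=
  knapsack_lp_wgs_general m k d uu huu p p' hpp' ubar x hx_box hx_util hx_opt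
end

section
/- Let agent i have a budget-additive SPLC utility with segment rates u_{ijt} ≥ 0 and lengths d_{ijt} > 0 on m goods, let p ∈ ℝ_{>0}^m be prices, and let x_i = (x_{ijt}) with 0 ≤ x_{ijt} ≤ d_{ijt} and u_i(x_i) = Σ_j Σ_t u_{ijt} x_{ijt} > 0. Suppose there exist multipliers r_{ijt} ≥ 0 and γ_i ≥ 0 satisfying the KKT conditions: (i) u_{ijt}/u_i(x_i) ≤ r_{ijt} + p_j + u_{ijt}·γ_i for all j, t; (ii) u_{ijt}/u_i(x_i) = r_{ijt} + p_j + u_{ijt}·γ_i whenever x_{ijt} > 0; (iii) x_{ijt} = d_{ijt} whenever r_{ijt} > 0; and suppose the utility is scaled so that the bang-per-buck equals 1, i.e., u_i(x_i)/(1 − γ_i·u_i(x_i)) = 1 (with γ_i·u_i(x_i) < 1). Then: if x_{ijt} > 0 then u_{ijt}/p_j ≥ 1; and if u_{ijt}/p_j > 1 then x_{ijt} = d_{ijt}. -/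
/-!
Scaling the bang-per-buck `u(x)/(1 - γ u(x))` to 1 means exactly `1/u(x) - γ = 1`, so the KKT
conditions (i) and (ii) collapse to `u_{jt} ≤ r_{jt} + p_j`, with equality on every bought
segment. Hence a bought segment has `u_{jt} ≥ p_j` since `r_{jt} ≥ 0`, and `u_{jt} > p_j` forces
`r_{jt} > 0`, so the segment is bought in full by complementary slackness (iii).
-/

lemma div_sub_mul_eq_self_of_div_one_sub_mul_eq_one {K : Type*} [Field K] {u γ : K}
    (h : u / (1 - γ * u) = 1) (a : K) : a / u - a * γ = a := by
  have hu : u = 1 - γ * u := eq_of_div_eq_one h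
  have hu0 : u ≠ 0 := by
    rintro rfl
    simp at h
  field_simp
  linear_combination (-a) * hu

theorem splc_mbb_properties_general
    (m : ℕ) (k : Fin m → ℕ) (d uu : ∀ j : Fin m, Fin (k j) → ℝ)
    (p : Fin m → ℝ) (hp : ∀ j, 0 < p j)
    (x : ∀ j : Fin m, Fin (k j) → ℝ)
    (ux : ℝ)
    (r : ∀ j : Fin m, Fin (k j) → ℝ) (hr : ∀ j t, 0 ≤ r j t)
    (γ : ℝ)
    (kkt1 : ∀ j t, uu j t / ux ≤ r j t + p j + uu j t * γ)
    (kkt2 : ∀ j t, 0 < x j t → uu j t / ux = r j t + p j + uu j t * γ)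
    (kkt3 : ∀ j t, 0 < r j t → x j t = d j t)
    (hscale : ux / (1 - γ * ux) = 1) :
    (∀ j t, 0 < x j t → 1 ≤ uu j t / p j) ∧
    (∀ j t, 1 < uu j t / p j → x j t = d j t) := by
  have hnorm := div_sub_mul_eq_self_of_div_one_sub_mul_eq_one hscale
  refine ⟨fun j t hxt => ?_, fun j t hgt => kkt3 j t ?_⟩
  · have h_eq : uu j t = r j t + p j := by linarith [kkt2 j t hxt, hnorm (uu j t)]
    rw [le_div_iff₀ (hp j)]
    linarith [hr j t]
  · have h_le : uu j t ≤ r j t + p j := by linarith [kkt1 j t, hnorm (uu j t)]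
    rw [lt_div_iff₀ (hp j)] at hgt
    linarith

/-- Proposition 5.1 for budget-additive SPLC utilities. If the bundle
`x` of an agent satisfies the KKT conditions of the Gale demand system with budget 1,
with multipliers `r ≥ 0` (capacities) and `γ ≥ 0` (utility cap), and the utility is
scaled so that the bang-per-buck `u(x)/(1 − γ·u(x))` equals 1, then: the agent only buys
segments with `u_{jt}/p_j ≥ 1`, and fully buys every segment with `u_{jt}/p_j > 1`. -/
theorem splc_mbb_properties
    (m : ℕ) (k : Fin m → ℕ) (d uu : ∀ j : Fin m, Fin (k j) → ℝ)
    (hd : ∀ j t, 0 < d j t) (huu : ∀ j t, 0 ≤ uu j t)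
    (p : Fin m → ℝ) (hp : ∀ j, 0 < p j)
    (x : ∀ j : Fin m, Fin (k j) → ℝ)
    (hx : ∀ j t, 0 ≤ x j t ∧ x j t ≤ d j t)
    (ux : ℝ) (hux_def : ux = ∑ j, ∑ t, uu j t * x j t) (hux_pos : 0 < ux)
    (r : ∀ j : Fin m, Fin (k j) → ℝ) (hr : ∀ j t, 0 ≤ r j t)
    (γ : ℝ) (hγ : 0 ≤ γ)
    (kkt1 : ∀ j t, uu j t / ux ≤ r j t + p j + uu j t * γ)
    (kkt2 : ∀ j t, 0 < x j t → uu j t / ux = r j t + p j + uu j t * γ)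
    (kkt3 : ∀ j t, 0 < r j t → x j t = d j t)
    (hscale' : γ * ux < 1)
    (hscale : ux / (1 - γ * ux) = 1) :
    (∀ j t, 0 < x j t → 1 ≤ uu j t / p j) ∧
    (∀ j t, 1 < uu j t / p j → x j t = d j t) :=
  splc_mbb_properties_general m k d uu p hp x ux r hr γ kkt1 kkt2 kkt3 hscale
end

section
/- Let agent i have a budget-additive SPLC utility with cap U_i > 0, segment rates u_{ijt} satisfying u_{ijt} ≤ U_i for all j, t, and lengths d_{ijt} > 0, let p ∈ ℝ_{>0}^m be prices, and let x_i = (x_{ijt}) with 0 ≤ x_{ijt} ≤ d_{ijt}, 0 < u_i(x_i) = Σ_j Σ_t u_{ijt} x_{ijt} ≤ U_i. Suppose there exist multipliers r_{ijt} ≥ 0 and γ_i ≥ 0 satisfying: (i) u_{ijt}/u_i(x_i) ≤ r_{ijt} + p_j + u_{ijt}·γ_i; (ii) equality in (i) whenever x_{ijt} > 0; (iii) x_{ijt} = d_{ijt} whenever r_{ijt} > 0; (iv) u_i(x_i) = U_i whenever γ_i > 0; and the scaling u_i(x_i)/(1 − γ_i·u_i(x_i)) = 1 (with γ_i·u_i(x_i)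 < 1). Call good j expensive if p_j > 1, and call the agent capped if u_i(x_i) = U_i. Then: if the agent is capped, x_{ijt} = 0 for every expensive good j and every t, and U_i ≤ 1; and if the agent is not capped, then u_i(x_i) = 1. -/
/-!
The scaling `u(x) / (1 - γ u(x)) = 1` says `u(x) (1 + γ) = 1`. If the agent is not capped,
complementary slackness (iv) forces `γ = 0`, hence `u(x) = 1`. If the agent is capped, then
`U = u(x) = 1 / (1 + γ) ≤ 1`, and any segment actually bought satisfies (ii) with nonnegative
`r` and `γ`, so its good has price at most `u_{jt} / u(x) = u_{jt} / U ≤ 1`: expensive goods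
are not bought.
-/

lemma mul_one_add_eq_one_of_div_one_sub_mul_eq_one {u γ : ℝ} (h : u / (1 - γ * u) = 1) :
    u * (1 + γ) = 1 := by
  have hden : 1 - γ * u ≠ 0 := by
    rintro hzero
    rw [hzero, div_zero] at h
    exact zero_ne_one h
  rw [div_eq_one_iff_eq hden] at h
  linarith

lemma le_one_of_mul_one_add_eq_one {u γ : ℝ} (hγ : 0 ≤ γ) (h : u * (1 + γ) = 1) : u ≤ 1 := by
  nlinarith

lemma le_div_of_div_eq_add_add_mul {u ux r p γ : ℝ} (hr : 0 ≤ r) (hu : 0 ≤ u) (hγ : 0 ≤ γ)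
    (h : u / ux = r + p + u * γ) : p ≤ u / ux := by
  rw [h]
  nlinarith [mul_nonneg hu hγ]

theorem splc_capped_uncapped_properties_general
    (m : ℕ) (k : Fin m → ℕ) (d uu : ∀ j : Fin m, Fin (k j) → ℝ)
    (huu : ∀ j t, 0 ≤ uu j t)
    (U : ℝ) (huuU : ∀ j t, uu j t ≤ U)
    (p : Fin m → ℝ)
    (x : ∀ j : Fin m, Fin (k j) → ℝ)
    (hx : ∀ j t, 0 ≤ x j t ∧ x j t ≤ d j t)
    (ux : ℝ)
    (hux_pos : 0 < ux)
    (r : ∀ j : Fin m, Fin (k j) → ℝ) (hr : ∀ j t, 0 ≤ r j t)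
    (γ : ℝ) (hγ : 0 ≤ γ)
    (kkt2 : ∀ j t, 0 < x j t → uu j t / ux = r j t + p j + uu j t * γ)
    (kkt4 : 0 < γ → ux = U)
    (hscale : ux / (1 - γ * ux) = 1) :
    (ux = U → (∀ j, 1 < p j → ∀ t, x j t = 0) ∧ U ≤ 1) ∧
    (ux ≠ U → ux = 1) := by
  have hkey := mul_one_add_eq_one_of_div_one_sub_mul_eq_one hscale
  refine ⟨fun hcap => ⟨fun j hpj t => ?_, hcap ▸ le_one_of_mul_one_add_eq_one hγ hkey⟩,
    fun huncapped => ?_⟩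
  · by_contra hxt
    have hbought : 0 < x j t := lt_of_le_of_ne (hx j t).1 (Ne.symm hxt)
    have hprice := le_div_of_div_eq_add_add_mul (hr j t) (huu j t) hγ (kkt2 j t hbought)
    have hratio : uu j t / ux ≤ 1 := div_le_one_of_le₀ (hcap ▸ huuU j t) hux_pos.le
    linarith
  · have hγ0 : γ = 0 := by
      by_contra hne
      exact huncapped (kkt4 (lt_of_le_of_ne hγ (Ne.symm hne)))
    simpa [hγ0] using hkey

/-- Proposition 5.2 for budget-additive SPLC utilities. If the bundle
`x` of an agent with cap `U > 0` (with all rates `u_{jt} ≤ U`) satisfies the KKT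
conditions (i)–(iv) of the Gale demand system with budget 1, with multipliers `r ≥ 0`
and `γ ≥ 0`, and the utility is scaled so that the bang-per-buck `u(x)/(1 − γ·u(x))`
equals 1, then: if the agent is capped (`u(x) = U`) they buy nothing of any expensive
good (`p_j > 1`) and `U ≤ 1`; and if the agent is not capped then `u(x) = 1`. -/
theorem splc_capped_uncapped_properties
    (m : ℕ) (k : Fin m → ℕ) (d uu : ∀ j : Fin m, Fin (k j) → ℝ)
    (hd : ∀ j t, 0 < d j t) (huu : ∀ j t, 0 ≤ uu j t)
    (U : ℝ) (hU : 0 < U) (huuU : ∀ j t, uu j t ≤ U)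
    (p : Fin m → ℝ) (hp : ∀ j, 0 < p j)
    (x : ∀ j : Fin m, Fin (k j) → ℝ)
    (hx : ∀ j t, 0 ≤ x j t ∧ x j t ≤ d j t)
    (ux : ℝ) (hux_def : ux = ∑ j, ∑ t, uu j t * x j t)
    (hux_pos : 0 < ux) (hux_cap : ux ≤ U)
    (r : ∀ j : Fin m, Fin (k j) → ℝ) (hr : ∀ j t, 0 ≤ r j t)
    (γ : ℝ) (hγ : 0 ≤ γ)
    (kkt1 : ∀ j t, uu j t / ux ≤ r j t + p j + uu j t * γ)
    (kkt2 : ∀ j t, 0 < x j t → uu j t / ux = r j t + p j + uu j t * γ)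
    (kkt3 : ∀ j t, 0 < r j t → x j t = d j t)
    (kkt4 : 0 < γ → ux = U)
    (hscale' : γ * ux < 1)
    (hscale : ux / (1 - γ * ux) = 1) :
    (ux = U → (∀ j, 1 < p j → ∀ t, x j t = 0) ∧ U ≤ 1) ∧
    (ux ≠ U → ux = 1) :=
  splc_capped_uncapped_properties_general m k d uu huu U huuU p x hx ux hux_pos r hr γ hγ kkt2 kkt4
    hscale
end

section
/- Consider n agents and m goods, good j having D_j ∈ ℕ copies, where each agent i has a budget-additive SPLC utility with segment rates u_{ijt}, lengths d_{ijt} with Σ_t d_{ijt} = D_j, and cap U_i, scaled so that u_{ijt} ≤ U_i and the bang-per-buck of every agent equals 1, and with U_i = ∞ for every non-capped agent. Let (x, p) be an SR-equilibrium of the associated Fisher market with all budgets equal to 1 and spending bounds t_j = D_j, i.e., each x_i is an optimal bundle of the Gale demand system of agent i at prices p with budget 1, and Σ_i Σ_t x_{ijt} = D_j·min{1, 1/p_j} for every good j. Let A_c be the set of capped agents (u_i(x_i) = U_i), A_u the set of non-capped agents, and H(p) = {j : p_j > 1}. Then for every integral allocation z of the copies of the goods to the agents, the total utility satisfies Σ_{i=1}^n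 u_i(z_i) ≤ Σ_{i∈A_c} U_i + |A_u| − Σ_{j∈H(p)} D_j + Σ_{j∈H(p)} D_j·p_j. -/
open Finset

/-- the total-utility bound in the proof of Lemma 5.3. Consider `n`
agents with budget-additive SPLC utilities (good `j` having `D_j` copies, segments of
lengths `d_{ijt}` summing to `D_j` with strictly decreasing nonnegative rates
`u_{ijt}`), scaled so that every agent's bang-per-buck equals 1 and `u_{ijt} ≤ U_i`,
where `C` is the set of capped agents (`u_i(x_i) = U_i`) and non-capped agents have no
cap (`U_i = ∞`). Let `(x, p)` be an SR-equilibrium with all budgets 1 and bounds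
`t_j = D_j`: each `x_i` satisfies the KKT conditions of Gale optimality at prices `p`
(with multipliers `r_i ≥ 0` and `γ_i ≥ 0`, `γ_i = 0` for agents without a cap), and
`Σ_i Σ_t x_{ijt} = D_j·min{1, 1/p_j}` for every good `j`. Then for every integral
allocation `z` of the copies of the goods, and every per-segment filling `y` of `z`, the
total utility satisfies
`Σ_i u_i(z_i) ≤ Σ_{i∈A_c} U_i + |A_u| − Σ_{j∈H(p)} D_j + Σ_{j∈H(p)} D_j p_j`, where
`H(p) = {j : p_j > 1}`. -/
theorem splc_sr_total_utility_bound
    (n m : ℕ) (hn : 0 < n)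
    (Dj : Fin m → ℕ)
    (k : Fin n → Fin m → ℕ)
    (d uu : ∀ (i : Fin n) (j : Fin m), Fin (k i j) → ℝ)
    (hd : ∀ i j t, 0 < d i j t)
    (hsum_d : ∀ i j, ∑ t, d i j t = (Dj j : ℝ))
    (huu0 : ∀ i j t, 0 ≤ uu i j t)
    (huu_dec : ∀ i j, StrictAnti (uu i j))
    -- capped agents and their caps; non-capped agents have `U_i = ∞` (no cap)
    (C : Finset (Fin n)) (U : Fin n → ℝ)
    (hU_pos : ∀ i ∈ C, 0 < U i)
    (huuU : ∀ i ∈ C, ∀ j t, uu i j t ≤ U i)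
    (p : Fin m → ℝ) (hp : ∀ j, 0 < p j)
    -- the SR-equilibrium allocation
    (x : ∀ (i : Fin n) (j : Fin m), Fin (k i j) → ℝ)
    (hx_box : ∀ i j t, 0 ≤ x i j t ∧ x i j t ≤ d i j t)
    (ux : Fin n → ℝ) (hux : ∀ i, ux i = ∑ j, ∑ t, uu i j t * x i j t)
    (hux_pos : ∀ i, 0 < ux i)
    (hcap : ∀ i ∈ C, ux i = U i)
    -- KKT conditions of Gale optimality at prices p with budget 1
    (r : ∀ (i : Fin n) (j : Fin m), Fin (k i j) → ℝ) (hr : ∀ i j t, 0 ≤ r i j t)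
    (γ : Fin n → ℝ) (hγ : ∀ i, 0 ≤ γ i)
    (hγ_uncapped : ∀ i ∉ C, γ i = 0)
    (kkt1 : ∀ i j t, uu i j t / ux i ≤ r i j t + p j + uu i j t * γ i)
    (kkt2 : ∀ i j t, 0 < x i j t → uu i j t / ux i = r i j t + p j + uu i j t * γ i)
    (kkt3 : ∀ i j t, 0 < r i j t → x i j t = d i j t)
    -- scaling: the bang-per-buck of every agent equals 1
    (hmbb' : ∀ i, γ i * ux i < 1)
    (hmbb : ∀ i, ux i / (1 - γ i * ux i) = 1)
    -- SR market clearing with bounds t_j = D_j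
    (hmarket : ∀ j, (∑ i, ∑ t, x i j t) = (Dj j : ℝ) * min 1 (1 / p j))
    -- an integral allocation `z` of the copies of the goods
    (z : Fin n → Fin m → ℕ) (hz : ∀ j, ∑ i, z i j = Dj j)
    -- a per-segment (greedy) filling `y` of `z`
    (y : ∀ (i : Fin n) (j : Fin m), Fin (k i j) → ℝ)
    (hy_box : ∀ i j t, 0 ≤ y i j t ∧ y i j t ≤ d i j t)
    (hy_z : ∀ i j, ∑ t, y i j t ≤ (z i j : ℝ))
    -- the resulting utilities (capped at `U_i` exactly for the agents in `C`)
    (uz : Fin n → ℝ)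
    (huz : ∀ i, uz i = if i ∈ C then min (U i) (∑ j, ∑ t, uu i j t * y i j t)
      else ∑ j, ∑ t, uu i j t * y i j t) :
    ∑ i, uz i ≤ ∑ i ∈ C, U i + ((Finset.univ \ C).card : ℝ)
      - ∑ j ∈ Finset.univ.filter (fun j => 1 < p j), (Dj j : ℝ)
      + ∑ j ∈ Finset.univ.filter (fun j => 1 < p j), (Dj j : ℝ) * p j := by
  have hux_eq : ∀ i, ux i = 1 - γ i * ux i := by
    intro i
    have h1 : (0:ℝ) < 1 - γ i * ux i := by linarith [hmbb' i]
    have h2 := hmbb i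
    rw [div_eq_one_iff_eq (ne_of_gt h1)] at h2
    linarith
  have hdiv : ∀ i j t, uu i j t / ux i = uu i j t + uu i j t * γ i := by
    intro i j t
    rw [div_eq_iff (ne_of_gt (hux_pos i))]
    linear_combination (-(uu i j t)) * hux_eq i
  have hkey_le : ∀ i j t, uu i j t ≤ r i j t + p j := by
    intro i j t
    have h := kkt1 i j t
    rw [hdiv i j t] at h; linarith
  have hkey_eq : ∀ i j t, 0 < x i j t → uu i j t = r i j t + p j := by
    intro i j t hxt
    have h := kkt2 i j t hxt
    rw [hdiv i j t] at h; linarith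
  have hpoint : ∀ i j t, uu i j t * y i j t
      ≤ uu i j t * x i j t - p j * x i j t + p j * y i j t := by
    intro i j t
    have hy := hy_box i j t
    have hx := hx_box i j t
    have hr' := hr i j t
    have hrd : r i j t * x i j t = r i j t * d i j t := by
      rcases eq_or_lt_of_le hr' with h | h
      · simp [← h]
      · rw [kkt3 i j t h]
    have hrx : r i j t * x i j t = uu i j t * x i j t - p j * x i j t := by
      rcases eq_or_lt_of_le hx.1 with h | h
      · simp [← h]
      · rw [hkey_eq i j t h]; ring
    nlinarith [mul_le_mul_of_nonneg_right (hkey_le i j t) hy.1,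
      mul_le_mul_of_nonneg_left hy.2 hr']
  have hagent : ∀ i, uz i ≤ ux i - (∑ j, p j * ∑ t, x i j t) + ∑ j, p j * (z i j : ℝ) := by
    intro i
    have h1 : uz i ≤ ∑ j, ∑ t, uu i j t * y i j t := by
      rw [huz i]
      split_ifs with h
      · exact min_le_right _ _
      · exact le_rfl
    have h2 : ∑ j, ∑ t, uu i j t * y i j t
        ≤ ∑ j, ∑ t, (uu i j t * x i j t - p j * x i j t + p j * y i j t) :=
      Finset.sum_le_sum fun j _ => Finset.sum_le_sum fun t _ => hpoint i j t
    have h3 : ∑ j, ∑ t, (uu i j t * x i j t - p j * x i j t + p j * y i j t)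
        = ux i - (∑ j, p j * ∑ t, x i j t) + ∑ j, p j * ∑ t, y i j t := by
      rw [hux i]
      simp only [Finset.sum_add_distrib, Finset.sum_sub_distrib, Finset.mul_sum]
    have h4 : ∑ j, p j * ∑ t, y i j t ≤ ∑ j, p j * (z i j : ℝ) :=
      Finset.sum_le_sum fun j _ => mul_le_mul_of_nonneg_left (hy_z i j) (hp j).le
    linarith [h3 ▸ h2]
  have htot : ∑ i, uz i ≤ (∑ i, ux i) - (∑ i, ∑ j, p j * ∑ t, x i j t)
      + ∑ i, ∑ j, p j * (z i j : ℝ) := by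
    have h := Finset.sum_le_sum fun i (_ : i ∈ Finset.univ) => hagent i
    calc ∑ i, uz i ≤ ∑ i, (ux i - (∑ j, p j * ∑ t, x i j t) + ∑ j, p j * (z i j : ℝ)) := h
      _ = _ := by rw [Finset.sum_add_distrib, Finset.sum_sub_distrib]
  have hA : ∑ i, ∑ j, p j * ∑ t, x i j t = ∑ j, (Dj j : ℝ) * min (p j) 1 := by
    rw [Finset.sum_comm]
    refine Finset.sum_congr rfl fun j _ => ?_
    rw [← Finset.mul_sum, hmarket j]
    rcases le_total (p j) 1 with h | h
    · rw [min_eq_left (one_le_one_div (hp j) h), min_eq_left h]; ring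
    · rw [min_eq_right ((div_le_one (hp j)).mpr h), min_eq_right h]
      field_simp
  have hB : ∑ i, ∑ j, p j * (z i j : ℝ) = ∑ j, (Dj j : ℝ) * p j := by
    rw [Finset.sum_comm]
    refine Finset.sum_congr rfl fun j _ => ?_
    rw [← Finset.mul_sum, ← Nat.cast_sum, hz j]; ring
  have hux_sum : ∑ i, ux i = ∑ i ∈ C, U i + ((Finset.univ \ C).card : ℝ) := by
    rw [← Finset.sum_sdiff (Finset.subset_univ C)]
    have h1 : ∑ i ∈ Finset.univ \ C, ux i = ((Finset.univ \ C).card : ℝ) := by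
      rw [Finset.sum_congr rfl (fun i hi => ?_), Finset.sum_const, nsmul_eq_mul, mul_one]
      have hiC : i ∉ C := (Finset.mem_sdiff.mp hi).2
      have h := hux_eq i
      rw [hγ_uncapped i hiC] at h
      linarith
    rw [h1, Finset.sum_congr rfl (fun i hi => hcap i hi)]
    ring
  set S := Finset.univ.filter (fun j => 1 < p j) with hS
  have hfin : ∑ j, ((Dj j : ℝ) * p j - (Dj j : ℝ) * min (p j) 1)
      = ∑ j ∈ S, ((Dj j : ℝ) * p j - (Dj j : ℝ) * min (p j) 1) := by
    refine (Finset.sum_filter_of_ne ?_).symm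
    intro j _ hne
    by_contra h
    push_neg at h
    exact hne (by rw [min_eq_left h]; ring)
  have hfin2 : ∑ j ∈ S, ((Dj j : ℝ) * p j - (Dj j : ℝ) * min (p j) 1)
      = ∑ j ∈ S, ((Dj j : ℝ) * p j - (Dj j : ℝ)) := by
    refine Finset.sum_congr rfl fun j hj => ?_
    have h := (Finset.mem_filter.mp hj).2
    rw [min_eq_right h.le, mul_one]
  simp only [Finset.sum_sub_distrib] at hfin hfin2
  linarith [htot, hA, hB, hux_sum, hfin, hfin2]
end

section
/- Consider n agents and m goods, good j having D_j ∈ ℕ copies, where each agent i has a budget-additive SPLC utility with segment rates u_{ijt}, lengths d_{ijt} with Σ_t d_{ijt} = D_j, and cap U_i, scaled so that u_{ijt} ≤ U_i and the bang-per-buck of every agent equals 1, and with U_i = ∞ for every non-capped agent. Let (x, p) be an SR-equilibrium of the associated Fisher market with all budgets equal to 1 and spending bounds t_j = D_j, i.e., each x_i is an optimal bundle of the Gale demand system of agent i at prices p with budget 1, and Σ_i Σ_t x_{ijt} = D_j·min{1, 1/p_j} for every good j. Let A_c be the set of capped agents (u_i(x_i) = U_i) and H(p) = {j : p_j > 1}.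 Then for every integral allocation x* of the copies of the goods to the agents, the Nash social welfare satisfies NSW(x*) = (Π_{i=1}^n u_i(x*_i))^{1/n} ≤ (Π_{i∈A_c} U_i · Π_{j∈H(p)} p_j^{D_j})^{1/n}. -/
open Finset

lemma aux_one_add_sum_le_prod_pow {ι : Type*} (S : Finset ι) (f : ι → ℝ) (g : ι → ℕ)
    (hf : ∀ j ∈ S, 1 ≤ f j) :
    1 + ∑ j ∈ S, (f j - 1) * (g j : ℝ) ≤ ∏ j ∈ S, f j ^ g j := by
  induction S using Finset.cons_induction with
  | empty => simp
  | cons a S ha IH =>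
    rw [Finset.sum_cons, Finset.prod_cons]
    have hfa : 1 ≤ f a := hf a (Finset.mem_cons_self a S)
    have h1 : 1 + (g a : ℝ) * (f a - 1) ≤ f a ^ g a := by
      have h := one_add_mul_le_pow (a := f a - 1) (by linarith) (g a)
      calc 1 + (g a : ℝ) * (f a - 1) ≤ (1 + (f a - 1)) ^ g a := h
        _ = f a ^ g a := by ring_nf
    have h2 : 1 + ∑ j ∈ S, (f j - 1) * (g j : ℝ) ≤ ∏ j ∈ S, f j ^ g j :=
      IH (fun j hj => hf j (Finset.mem_cons_of_mem hj))
    have hA : 0 ≤ (f a - 1) * (g a : ℝ) := mul_nonneg (by linarith) (Nat.cast_nonneg _)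
    have hB : 0 ≤ ∑ j ∈ S, (f j - 1) * (g j : ℝ) :=
      Finset.sum_nonneg fun j hj =>
        mul_nonneg (by linarith [hf j (Finset.mem_cons_of_mem hj)]) (Nat.cast_nonneg _)
    have hX0 : (0:ℝ) ≤ f a ^ g a := pow_nonneg (by linarith) _
    have hmul : (1 + (f a - 1) * (g a : ℝ)) * (1 + ∑ j ∈ S, (f j - 1) * (g j : ℝ))
        ≤ f a ^ g a * ∏ j ∈ S, f j ^ g j := by
      apply mul_le_mul _ h2 (by linarith) hX0
      linarith [h1]
    nlinarith [hmul, hA, hB]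

/-- Lemma 5.3. Consider `n` agents with budget-additive SPLC
utilities (good `j` having `D_j` copies, segments of lengths `d_{ijt}` summing to `D_j`
with strictly decreasing nonnegative rates `u_{ijt}`), scaled so that every agent's
bang-per-buck equals 1 and `u_{ijt} ≤ U_i`, where `C` is the set of capped agents
(`u_i(x_i) = U_i`) and non-capped agents have no cap (`U_i = ∞`). Let `(x, p)` be an
SR-equilibrium with all budgets 1 and bounds `t_j = D_j`: each `x_i` satisfies the KKT
conditions of Gale optimality at prices `p` (with multipliers `r_i ≥ 0` and `γ_i ≥ 0`,
`γ_i = 0` for agents without a cap), and `Σ_i Σ_t x_{ijt} = D_j·min{1, 1/p_j}` for every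
good `j`. Then for every integral allocation `z` of the copies of the goods, and every
per-segment filling `y` of `z`, the Nash social welfare satisfies
`(Π_i u_i(z_i))^{1/n} ≤ (Π_{i∈A_c} U_i · Π_{j∈H(p)} p_j^{D_j})^{1/n}`, where
`H(p) = {j : p_j > 1}`. -/
theorem splc_sr_nsw_upper_bound
    (n m : ℕ) (hn : 0 < n)
    (Dj : Fin m → ℕ)
    (k : Fin n → Fin m → ℕ)
    (d uu : ∀ (i : Fin n) (j : Fin m), Fin (k i j) → ℝ)
    (hd : ∀ i j t, 0 < d i j t)
    (hsum_d : ∀ i j, ∑ t, d i j t = (Dj j : ℝ))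
    (huu0 : ∀ i j t, 0 ≤ uu i j t)
    (huu_dec : ∀ i j, StrictAnti (uu i j))
    -- capped agents and their caps; non-capped agents have `U_i = ∞` (no cap)
    (C : Finset (Fin n)) (U : Fin n → ℝ)
    (hU_pos : ∀ i ∈ C, 0 < U i)
    (huuU : ∀ i ∈ C, ∀ j t, uu i j t ≤ U i)
    (p : Fin m → ℝ) (hp : ∀ j, 0 < p j)
    -- the SR-equilibrium allocation
    (x : ∀ (i : Fin n) (j : Fin m), Fin (k i j) → ℝ)
    (hx_box : ∀ i j t, 0 ≤ x i j t ∧ x i j t ≤ d i j t)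
    (ux : Fin n → ℝ) (hux : ∀ i, ux i = ∑ j, ∑ t, uu i j t * x i j t)
    (hux_pos : ∀ i, 0 < ux i)
    (hcap : ∀ i ∈ C, ux i = U i)
    -- KKT conditions of Gale optimality at prices p with budget 1
    (r : ∀ (i : Fin n) (j : Fin m), Fin (k i j) → ℝ) (hr : ∀ i j t, 0 ≤ r i j t)
    (γ : Fin n → ℝ) (hγ : ∀ i, 0 ≤ γ i)
    (hγ_uncapped : ∀ i ∉ C, γ i = 0)
    (kkt1 : ∀ i j t, uu i j t / ux i ≤ r i j t + p j + uu i j t * γ i)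
    (kkt2 : ∀ i j t, 0 < x i j t → uu i j t / ux i = r i j t + p j + uu i j t * γ i)
    (kkt3 : ∀ i j t, 0 < r i j t → x i j t = d i j t)
    -- scaling: the bang-per-buck of every agent equals 1
    (hmbb' : ∀ i, γ i * ux i < 1)
    (hmbb : ∀ i, ux i / (1 - γ i * ux i) = 1)
    -- SR market clearing with bounds t_j = D_j
    (hmarket : ∀ j, (∑ i, ∑ t, x i j t) = (Dj j : ℝ) * min 1 (1 / p j))
    -- an integral allocation `z` of the copies of the goods
    (z : Fin n → Fin m → ℕ) (hz : ∀ j, ∑ i, z i j = Dj j)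
    -- a per-segment (greedy) filling `y` of `z`
    (y : ∀ (i : Fin n) (j : Fin m), Fin (k i j) → ℝ)
    (hy_box : ∀ i j t, 0 ≤ y i j t ∧ y i j t ≤ d i j t)
    (hy_z : ∀ i j, ∑ t, y i j t ≤ (z i j : ℝ))
    -- the resulting utilities (capped at `U_i` exactly for the agents in `C`)
    (uz : Fin n → ℝ)
    (huz : ∀ i, uz i = if i ∈ C then min (U i) (∑ j, ∑ t, uu i j t * y i j t)
      else ∑ j, ∑ t, uu i j t * y i j t) :
    (∏ i, uz i) ^ ((1 : ℝ) / n) ≤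
      ((∏ i ∈ C, U i) *
        ∏ j ∈ Finset.univ.filter (fun j => 1 < p j), (p j) ^ (Dj j)) ^ ((1 : ℝ) / n) := by
  classical
  set H : Finset (Fin m) := Finset.univ.filter (fun j => 1 < p j) with hH
  set w : Fin m → ℝ := fun j => if 1 < p j then 1 else p j with hwdef
  set s : Fin n → ℝ := fun i => ∑ j, p j * ∑ t, x i j t with hsdef
  set R : Fin n → ℝ := fun i => ∑ j, ∑ t, r i j t * x i j t with hRdef
  set P : Fin n → ℝ := fun i => ∏ j ∈ H, p j ^ z i j with hPdef
  set σ : Fin n → ℝ := fun i => (∑ j, w j * (z i j : ℝ)) - s i with hσdef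
  -- basic scaling facts
  have hux1 : ∀ i, ux i + γ i * ux i = 1 := by
    intro i
    have h2 : 0 < 1 - γ i * ux i := by linarith [hmbb' i]
    have h := hmbb i
    rw [div_eq_one_iff_eq h2.ne'] at h
    linarith
  have hux_le1 : ∀ i, ux i ≤ 1 := by
    intro i
    nlinarith [hux1 i, mul_nonneg (hγ i) (hux_pos i).le]
  have huu_rp : ∀ i j t, uu i j t ≤ r i j t + p j := by
    intro i j t
    have h := (div_le_iff₀ (hux_pos i)).mp (kkt1 i j t)
    have e : γ i * ux i = 1 - ux i := by linarith [hux1 i]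
    have h3 : uu i j t * ux i ≤ (r i j t + p j) * ux i := by
      nlinarith [h, mul_le_mul_of_nonneg_left e.le (huu0 i j t),
        mul_le_mul_of_nonneg_left e.ge (huu0 i j t)]
    exact le_of_mul_le_mul_right h3 (hux_pos i)
  have hR0 : ∀ i, 0 ≤ R i := by
    intro i
    apply Finset.sum_nonneg; intro j _
    exact Finset.sum_nonneg fun t _ => mul_nonneg (hr i j t) (hx_box i j t).1
  have hRs : ∀ i, R i + s i = ux i := by
    intro i
    have key : ∀ j t, uu i j t * x i j t
        = (r i j t + p j + uu i j t * γ i) * x i j t * ux i := by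
      intro j t
      rcases eq_or_lt_of_le (hx_box i j t).1 with h0 | hpos
      · rw [← h0]; ring
      · have h := kkt2 i j t hpos
        rw [div_eq_iff (hux_pos i).ne'] at h
        linear_combination (x i j t) * h
    have h1 : ux i = (R i + s i + γ i * ux i) * ux i := by
      calc ux i = ∑ j, ∑ t, uu i j t * x i j t := hux i
        _ = ∑ j, ∑ t, (r i j t + p j + uu i j t * γ i) * x i j t * ux i :=
            Finset.sum_congr rfl fun j _ => Finset.sum_congr rfl fun t _ => key j t
        _ = (∑ j, ((∑ t, r i j t * x i j t) + p j * (∑ t, x i j t)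
              + γ i * (∑ t, uu i j t * x i j t))) * ux i := by
            rw [Finset.sum_mul]
            refine Finset.sum_congr rfl fun j _ => ?_
            rw [← Finset.sum_mul]
            congr 1
            rw [Finset.mul_sum, Finset.mul_sum, ← Finset.sum_add_distrib,
              ← Finset.sum_add_distrib]
            exact Finset.sum_congr rfl fun t _ => by ring
        _ = (R i + s i + γ i * ux i) * ux i := by
            congr 1
            rw [Finset.sum_add_distrib, Finset.sum_add_distrib, ← Finset.mul_sum, ← hux i]
    have h2 : R i + s i + γ i * ux i = 1 := by
      have h1' : (R i + s i + γ i * ux i) * ux i = 1 * ux i := by linear_combination - h1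
      exact mul_right_cancel₀ (hux_pos i).ne' h1'
    linarith [hux1 i, h2]
  have hs_le1 : ∀ i, s i ≤ 1 := by
    intro i; linarith [hRs i, hR0 i, hux_le1 i]
  -- per-segment bound
  have hseg : ∀ i j t, uu i j t * y i j t ≤ r i j t * x i j t + p j * y i j t := by
    intro i j t
    have hy0 := (hy_box i j t).1
    rcases eq_or_lt_of_le (hr i j t) with h0 | hpos
    · have h1 : uu i j t ≤ p j := by
        have := huu_rp i j t; rw [← h0] at this; linarith
      rw [← h0]
      nlinarith [mul_le_mul_of_nonneg_right h1 hy0]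
    · have hxd := kkt3 i j t hpos
      have hyx : y i j t ≤ x i j t := by rw [hxd]; exact (hy_box i j t).2
      have h1 : uu i j t * y i j t ≤ (r i j t + p j) * y i j t :=
        mul_le_mul_of_nonneg_right (huu_rp i j t) hy0
      nlinarith [mul_le_mul_of_nonneg_left hyx hpos.le]
  -- step 1 : bundle value bound
  have hM1 : ∀ i, (∑ j, ∑ t, uu i j t * y i j t) ≤ R i + ∑ j, p j * (z i j : ℝ) := by
    intro i
    have h1 : (∑ j, ∑ t, uu i j t * y i j t)
        ≤ ∑ j, ((∑ t, r i j t * x i j t) + p j * ∑ t, y i j t) := by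
      refine Finset.sum_le_sum fun j _ => ?_
      calc ∑ t, uu i j t * y i j t ≤ ∑ t, (r i j t * x i j t + p j * y i j t) :=
            Finset.sum_le_sum fun t _ => hseg i j t
        _ = (∑ t, r i j t * x i j t) + p j * ∑ t, y i j t := by
            rw [Finset.sum_add_distrib, Finset.mul_sum]
    have h2 : ∑ j, ((∑ t, r i j t * x i j t) + p j * ∑ t, y i j t)
        = R i + ∑ j, p j * ∑ t, y i j t := by
      rw [Finset.sum_add_distrib, hRdef]
    have h3 : (∑ j, p j * ∑ t, y i j t) ≤ ∑ j, p j * (z i j : ℝ) :=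
      Finset.sum_le_sum fun j _ => mul_le_mul_of_nonneg_left (hy_z i j) (hp j).le
    linarith [h1, h2 ▸ h1, h3]
  -- step 2 : price mass vs product over expensive goods
  have hP1 : ∀ i, 1 ≤ P i := by
    intro i
    show (1:ℝ) ≤ ∏ j ∈ H, p j ^ z i j
    have h := Finset.prod_le_prod (f := fun _ : Fin m => (1:ℝ))
      (g := fun j => p j ^ z i j) (s := H)
      (fun _ _ => zero_le_one)
      (fun j hj => one_le_pow₀ (by rw [hH] at hj; exact (Finset.mem_filter.mp hj).2.le))
    simpa using h
  have hstep2 : ∀ i, (∑ j, p j * (z i j : ℝ)) ≤ P i - 1 + ∑ j, w j * (z i j : ℝ) := by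
    intro i
    have hb : 1 + ∑ j ∈ H, (p j - 1) * (z i j : ℝ) ≤ P i := by
      show 1 + ∑ j ∈ H, (p j - 1) * (z i j : ℝ) ≤ ∏ j ∈ H, p j ^ z i j
      exact aux_one_add_sum_le_prod_pow H p (z i) fun j hj =>
        le_of_lt (by rw [hH] at hj; exact (Finset.mem_filter.mp hj).2)
    have hsplit : (∑ j, p j * (z i j : ℝ)) - ∑ j, w j * (z i j : ℝ)
        = ∑ j ∈ H, (p j - 1) * (z i j : ℝ) := by
      rw [hH, Finset.sum_filter, ← Finset.sum_sub_distrib]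
      refine Finset.sum_congr rfl fun j _ => ?_
      by_cases h : 1 < p j
      · simp only [hwdef, if_pos h]; ring
      · simp only [hwdef, if_neg h]; ring
    linarith [hb, hsplit]
  -- combined bundle bound
  have hMfinal : ∀ i, (∑ j, ∑ t, uu i j t * y i j t) ≤ ux i - 1 + P i + σ i := by
    intro i
    have := hM1 i
    have h2 := hstep2 i
    have h3 := hRs i
    have hσi : σ i = (∑ j, w j * (z i j : ℝ)) - s i := rfl
    linarith [hσi]
  -- if σ i < 0 then P i = 1
  have hw0 : ∀ j, 0 ≤ w j := by
    intro j
    rw [hwdef]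
    by_cases h : 1 < p j
    · simp [h]
    · simp [h, (hp j).le]
  have hkey : ∀ i, σ i < 0 → P i = 1 := by
    intro i hσi
    have h1 : (∑ j ∈ H, (z i j : ℝ)) ≤ ∑ j, w j * (z i j : ℝ) := by
      calc (∑ j ∈ H, (z i j : ℝ)) = ∑ j ∈ H, w j * (z i j : ℝ) := by
            refine Finset.sum_congr rfl fun j hj => ?_
            have hpj : 1 < p j := by rw [hH] at hj; exact (Finset.mem_filter.mp hj).2
            rw [hwdef]; simp [hpj]
        _ ≤ ∑ j, w j * (z i j : ℝ) := by
            refine Finset.sum_le_sum_of_subset_of_nonneg ?_ fun j _ _ =>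
              mul_nonneg (hw0 j) (Nat.cast_nonneg _)
            rw [hH]; exact Finset.filter_subset _ _
    have h2 : (∑ j ∈ H, (z i j : ℝ)) < 1 := by
      have hσ2 : (∑ j, w j * (z i j : ℝ)) - s i < 0 := hσi
      linarith [hs_le1 i]
    have hnat : ∑ j ∈ H, z i j = 0 := by
      by_contra hne
      have h4 : 1 ≤ ∑ j ∈ H, z i j := Nat.one_le_iff_ne_zero.mpr hne
      have h5 : (1:ℝ) ≤ ∑ j ∈ H, (z i j : ℝ) := by
        calc (1:ℝ) ≤ ((∑ j ∈ H, z i j : ℕ) : ℝ) := by exact_mod_cast h4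
          _ = ∑ j ∈ H, (z i j : ℝ) := by push_cast; rfl
      linarith
    have h6 : ∀ j ∈ H, z i j = 0 := fun j hj =>
      (Finset.sum_eq_zero_iff.mp hnat) j hj
    show (∏ j ∈ H, p j ^ z i j) = 1
    exact Finset.prod_eq_one fun j hj => by rw [h6 j hj, pow_zero]
  -- the per-agent multiplicative bound
  have hexp : ∀ i, uz i ≤ (if i ∈ C then U i else 1) * (P i * Real.exp (σ i)) := by
    intro i
    have hP1i := hP1 i
    have hMb := hMfinal i
    by_cases hC : i ∈ C
    · rw [huz i, if_pos hC, if_pos hC]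
      have hU0 := hU_pos i hC
      have hU1 : U i ≤ 1 := by rw [← hcap i hC]; exact hux_le1 i
      have huxU : ux i = U i := hcap i hC
      rcases le_or_gt 0 (σ i) with hσ0 | hσ0
      · have h2 : 1 ≤ Real.exp (σ i) := Real.one_le_exp hσ0
        have hPE : 1 ≤ P i * Real.exp (σ i) := by nlinarith
        exact (min_le_left _ _).trans (le_mul_of_one_le_right hU0.le hPE)
      · have hPi1 : P i = 1 := hkey i hσ0
        have h1 : min (U i) (∑ j, ∑ t, uu i j t * y i j t) ≤ U i + σ i := by
          rw [hPi1, huxU] at hMb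
          calc min (U i) (∑ j, ∑ t, uu i j t * y i j t)
              ≤ ∑ j, ∑ t, uu i j t * y i j t := min_le_right _ _
            _ ≤ U i + σ i := by linarith
        have ht := Real.add_one_le_exp (σ i / U i)
        have hmul := mul_le_mul_of_nonneg_left ht hU0.le
        have hc : U i * (σ i / U i + 1) = σ i + U i := by field_simp
        rw [hc] at hmul
        have h3 : Real.exp (σ i / U i) ≤ Real.exp (σ i) := by
          apply Real.exp_le_exp.mpr
          rw [div_le_iff₀ hU0]
          nlinarith
        calc min (U i) (∑ j, ∑ t, uu i j t * y i j t) ≤ U i + σ i := h1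
          _ ≤ U i * Real.exp (σ i / U i) := by linarith
          _ ≤ U i * Real.exp (σ i) := mul_le_mul_of_nonneg_left h3 hU0.le
          _ = U i * (P i * Real.exp (σ i)) := by rw [hPi1, one_mul]
    · rw [huz i, if_neg hC, if_neg hC, one_mul]
      have hux1i : ux i = 1 := by
        have h := hux1 i
        rw [hγ_uncapped i hC] at h
        linarith
      rcases le_or_gt 0 (σ i) with hσ0 | hσ0
      · have h2 : 1 + σ i ≤ Real.exp (σ i) := by linarith [Real.add_one_le_exp (σ i)]
        nlinarith [hMb, mul_le_mul_of_nonneg_left h2 (by linarith : (0:ℝ) ≤ P i),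
          mul_nonneg (by linarith : (0:ℝ) ≤ P i - 1) hσ0]
      · have hPi1 : P i = 1 := hkey i hσ0
        have h2 : 1 + σ i ≤ Real.exp (σ i) := by linarith [Real.add_one_le_exp (σ i)]
        rw [hPi1, one_mul]
        rw [hPi1] at hMb
        linarith
  -- sum of σ is zero
  have hσsum : ∑ i, σ i = 0 := by
    have hA : (∑ i, ∑ j, w j * (z i j : ℝ)) = ∑ j, w j * (Dj j : ℝ) := by
      rw [Finset.sum_comm]
      refine Finset.sum_congr rfl fun j _ => ?_
      rw [← Finset.mul_sum]
      congr 1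
      rw [← Nat.cast_sum, hz j]
    have hB : (∑ i, s i) = ∑ j, w j * (Dj j : ℝ) := by
      show (∑ i, ∑ j, p j * ∑ t, x i j t) = ∑ j, w j * (Dj j : ℝ)
      rw [Finset.sum_comm]
      refine Finset.sum_congr rfl fun j _ => ?_
      rw [← Finset.mul_sum]
      rw [hmarket j]
      by_cases h : 1 < p j
      · have hmin : min 1 (1 / p j) = 1 / p j :=
          min_eq_right (by rw [div_le_one (hp j)]; linarith)
        rw [hmin, hwdef]
        simp only [if_pos h]
        field_simp
      · have hmin : min 1 (1 / p j) = 1 :=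
          min_eq_left (by rw [le_div_iff₀ (hp j)]; linarith)
        rw [hmin, hwdef]
        simp only [if_neg h]
        ring
    show (∑ i, ((∑ j, w j * (z i j : ℝ)) - s i)) = 0
    rw [Finset.sum_sub_distrib, hA, hB]
    ring
  -- nonnegativity of uz
  have huz0 : ∀ i, 0 ≤ uz i := by
    intro i
    rw [huz i]
    have hy0 : 0 ≤ ∑ j, ∑ t, uu i j t * y i j t :=
      Finset.sum_nonneg fun j _ => Finset.sum_nonneg fun t _ =>
        mul_nonneg (huu0 i j t) (hy_box i j t).1
    split_ifs with hC
    · exact le_min (hU_pos i hC).le hy0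
    · exact hy0
  -- product bound
  have hprod : (∏ i, uz i) ≤ (∏ i ∈ C, U i) * ∏ j ∈ H, p j ^ Dj j := by
    have h1 : (∏ i, uz i) ≤ ∏ i, ((if i ∈ C then U i else 1) * (P i * Real.exp (σ i))) :=
      Finset.prod_le_prod (fun i _ => huz0 i) (fun i _ => hexp i)
    have h2 : (∏ i, ((if i ∈ C then U i else 1) * (P i * Real.exp (σ i))))
        = (∏ i, (if i ∈ C then U i else 1)) * ((∏ i, P i) * (∏ i, Real.exp (σ i))) := by
      rw [Finset.prod_mul_distrib, Finset.prod_mul_distrib]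
    have h3 : (∏ i, (if i ∈ C then U i else 1)) = ∏ i ∈ C, U i := by
      rw [Finset.prod_ite_mem, Finset.univ_inter]
    have h4 : (∏ i, P i) = ∏ j ∈ H, p j ^ Dj j := by
      show (∏ i, ∏ j ∈ H, p j ^ z i j) = ∏ j ∈ H, p j ^ Dj j
      rw [Finset.prod_comm]
      exact Finset.prod_congr rfl fun j _ => by
        rw [Finset.prod_pow_eq_pow_sum, hz j]
    have h5 : (∏ i, Real.exp (σ i)) = 1 := by
      rw [← Real.exp_sum, hσsum, Real.exp_zero]
    rw [h2, h3, h4, h5, mul_one] at h1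
    exact h1
  -- conclude via rpow monotonicity
  have hnn : 0 ≤ ∏ i, uz i := Finset.prod_nonneg fun i _ => huz0 i
  exact Real.rpow_le_rpow hnn hprod (by positivity)
end
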